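/- arXiv:2310.00241 — 9 statements merged into one kernel-verified Lean document; each statement's English description precedes it below -/
import Mathlib

section
/- Let G be a finite connected split graph with clique part K and independent part S, and let D be a distance-2 dominating set of G. For any u ∈ D and any neighbor v of u with v ∉ D, if (D \ {u}) ∩ K is nonempty, then (D \ {u}) ∪ {v} is a distance-2 dominating set of G. -/
/-!
A single clique vertex `k` already dominates a connected split graph at distance two: a vertex
`w ≠ k` has a neighbour `m` on its way to `k`; if `w` lies in the clique then `k ~ w`, and otherwise
`m` cannot lie in the independent part, so `k ~ m ~ w` (or `m = k`). Since the vertex of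
`(D \ {u}) ∩ K` survives the exchange, `(D \ {u}) ∪ {v}` is a distance-2 dominating set.
-/

/-- `D` is a distance-`r` dominating set of `G`: every vertex is within
distance `r` (along a path) of some member of `D`. -/
def IsDrDS {V : Type*} (G : SimpleGraph V) (r : ℕ) (D : Set V) : Prop :=
  ∀ v : V, ∃ u ∈ D, G.Reachable u v ∧ G.dist u v ≤ r

theorem IsDrDS.mono {V : Type*} {G : SimpleGraph V} {r : ℕ} {D D' : Set V} (hD : IsDrDS G r D)
    (hDD' : D ⊆ D') : IsDrDS G r D' := fun w ↦
  let ⟨x, hx, hreach, hdist⟩ := hD w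
  ⟨x, hDD' hx, hreach, hdist⟩

namespace SimpleGraph

variable {V : Type*} {G : SimpleGraph V}

theorem Connected.exists_adj_of_ne (hconn : G.Connected) {w k : V} (hwk : w ≠ k) :
    ∃ m, G.Adj w m :=
  ⟨_, (hconn.preconnected w k).some.adj_snd (Walk.not_nil_of_ne hwk)⟩

theorem dist_le_two_of_adj_of_adj {a b c : V} (hab : G.Adj a b) (hbc : G.Adj b c) :
    G.dist a c ≤ 2 :=
  dist_le (Walk.cons hab hbc.toWalk)

theorem isDrDS_two_singleton_of_mem_clique {K S : Set V} (hpart : K ∪ S = Set.univ)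
    (hK : G.IsClique K) (hS : ∀ a ∈ S, ∀ b ∈ S, ¬ G.Adj a b) (hconn : G.Connected)
    {k : V} (hk : k ∈ K) : IsDrDS G 2 {k} := by
  have hKS (a : V) : a ∈ K ∨ a ∈ S := (Set.ext_iff.mp hpart a).mpr trivial
  intro w
  refine ⟨k, rfl, hconn.preconnected k w, ?_⟩
  by_cases hwk : w = k
  · simp [hwk]
  obtain ⟨m, hwm⟩ := hconn.exists_adj_of_ne hwk
  rcases hKS w with hwK | hwS
  · exact (dist_eq_one_iff_adj.mpr (hK hk hwK (Ne.symm hwk))).trans_le one_le_two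
  have hmK : m ∈ K := (hKS m).resolve_right fun hmS ↦ hS w hwS m hmS hwm
  by_cases hkm : k = m
  · subst hkm
    exact (dist_eq_one_iff_adj.mpr hwm.symm).trans_le one_le_two
  · exact dist_le_two_of_adj_of_adj (hK hk hmK hkm) hwm.symm

end SimpleGraph

theorem stmt3_general {V : Type*} (G : SimpleGraph V) (K S : Set V)
    (hpart : K ∪ S = Set.univ)
    (hK : G.IsClique K) (hS : ∀ a ∈ S, ∀ b ∈ S, ¬ G.Adj a b)
    (hconn : G.Connected)
    (D : Set V)
    (u : V) (v : V)
    (hne : ((D \ {u}) ∩ K).Nonempty) :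
    IsDrDS G 2 ((D \ {u}) ∪ {v}) := by
  obtain ⟨k, hkD, hkK⟩ := hne
  exact (SimpleGraph.isDrDS_two_singleton_of_mem_clique hpart hK hS hconn hkK).mono
    (Set.singleton_subset_iff.mpr (Or.inl hkD))

theorem stmt3 {V : Type*} [Fintype V] (G : SimpleGraph V) (K S : Set V)
    (hpart : K ∪ S = Set.univ) (hdisj : Disjoint K S)
    (hK : G.IsClique K) (hS : ∀ a ∈ S, ∀ b ∈ S, ¬ G.Adj a b)
    (hconn : G.Connected)
    (D : Set V) (hD : IsDrDS G 2 D)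
    (u : V) (hu : u ∈ D) (v : V) (hadj : G.Adj u v) (hv : v ∉ D)
    (hne : ((D \ {u}) ∩ K).Nonempty) :
    IsDrDS G 2 ((D \ {u}) ∪ {v}) :=
  stmt3_general G K S hpart hK hS hconn D u v hne
end

section
/- Let G be a finite connected split graph and let D_s and D_t be two distance-2 dominating sets of G with |D_s| = |D_t|. Then there exists a TJ-sequence in G from D_s to D_t. -/
/-- A TJ-sequence of length `q` of distance-`r` dominating sets of `G`:
each step jumps a token to an arbitrary unoccupied vertex. -/
def IsTJSeq {V : Type*} (G : SimpleGraph V) (r q : ℕ)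
    (Dseq : Fin (q + 1) → Finset V) : Prop :=
  (∀ i, IsDrDS G r ↑(Dseq i)) ∧
  ∀ i : Fin q, ∃ x ∈ Dseq i.castSucc, ∃ y, y ∉ Dseq i.castSucc ∧
    (↑(Dseq i.succ) : Set V) = (↑(Dseq i.castSucc) \ {x}) ∪ {y}

section TokenJumping

variable {V : Type*} (G : SimpleGraph V) (r : ℕ)

def TJStep [DecidableEq V] (A B : Finset V) : Prop :=
  IsDrDS G r ↑B ∧ ∃ x ∈ A, ∃ y ∉ A, B = insert y (A.erase x)

variable {G r}

lemma isDrDS_of_eccent_le {k : V} (hk : G.eccent k ≤ r) {D : Set V} (hkD : k ∈ D) :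
    IsDrDS G r D := by
  intro v
  have hkv : G.edist k v ≤ r := (G.eccent_le_iff k r).1 hk v
  have hreach : G.Reachable k v :=
    SimpleGraph.reachable_of_edist_ne_top (ne_top_of_le_ne_top (ENat.natCast_ne_top r) hkv)
  refine ⟨k, hkD, hreach, ?_⟩
  rwa [← hreach.coe_dist_eq_edist, Nat.cast_le] at hkv

lemma exists_tjSeq_of_reflTransGen [DecidableEq V] {Ds Dt : Finset V} (hDs : IsDrDS G r ↑Ds)
    (h : Relation.ReflTransGen (TJStep G r) Ds Dt) :
    ∃ (q : ℕ) (Dseq : Fin (q + 1) → Finset V),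
      IsTJSeq G r q Dseq ∧ Dseq 0 = Ds ∧ Dseq (Fin.last q) = Dt := by
  induction h with
  | refl => exact ⟨0, fun _ => Ds, ⟨fun _ => hDs, fun i => i.elim0⟩, rfl, rfl⟩
  | @tail B C _ hBC ih =>
    obtain ⟨q, Dseq, ⟨hdom, hjump⟩, h0, hlast⟩ := ih
    obtain ⟨hC, x, hxB, y, hyB, rfl⟩ := hBC
    refine ⟨q + 1, Fin.snoc Dseq (insert y (B.erase x)), ⟨?_, ?_⟩, ?_, by simp⟩
    · intro i
      induction i using Fin.lastCases with
      | last => simpa using hC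
      | cast j => simpa using hdom j
    · intro i
      induction i using Fin.lastCases with
      | last =>
        simp only [Fin.succ_last, Fin.snoc_last, Fin.snoc_castSucc, hlast]
        exact ⟨x, hxB, y, hyB, by push_cast; rw [Set.union_singleton]⟩
      | cast j => simpa only [Fin.succ_castSucc, Fin.snoc_castSucc] using hjump j
    · rw [← Fin.castSucc_zero, Fin.snoc_castSucc, h0]

variable [DecidableEq V]

lemma card_insert_erase {A : Finset V} {x y : V} (hx : x ∈ A) (hy : y ∉ A) :
    (insert y (A.erase x)).card = A.card := by
  rw [Finset.card_insert_of_notMem (fun h => hy (Finset.mem_of_mem_erase h)),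
    Finset.card_erase_add_one hx]

lemma TJStep.symm {A B : Finset V} (hA : IsDrDS G r ↑A) (h : TJStep G r A B) :
    TJStep G r B A := by
  obtain ⟨-, x, hxA, y, hyA, rfl⟩ := h
  have hxy : x ≠ y := fun h => hyA (h ▸ hxA)
  refine ⟨hA, y, Finset.mem_insert_self y _, x, by simp [hxy], ?_⟩
  rw [Finset.erase_insert (fun h => hyA (Finset.mem_of_mem_erase h)),
    Finset.insert_erase hxA]

lemma reflTransGen_tjStep_of_mem {k : V} (hk : G.eccent k ≤ r) {A B : Finset V}
    (hkA : k ∈ A) (hkB : k ∈ B) (hcard : A.card = B.card) :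
    Relation.ReflTransGen (TJStep G r) A B := by
  induction hn : (B \ A).card generalizing A with
  | zero =>
    have hBA : B ⊆ A := Finset.sdiff_eq_empty_iff_subset.1 (Finset.card_eq_zero.1 hn)
    rw [Finset.eq_of_subset_of_card_le hBA hcard.le]
  | succ n ih =>
    obtain ⟨y, hy⟩ : (B \ A).Nonempty := Finset.card_pos.1 (by omega)
    obtain ⟨x, hx⟩ : (A \ B).Nonempty :=
      Finset.card_pos.1 (by rw [Finset.card_sdiff_comm hcard]; omega)
    rw [Finset.mem_sdiff] at hx hy
    have hxk : k ≠ x := fun h => hx.2 (h ▸ hkB)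
    have hkA' : k ∈ insert y (A.erase x) :=
      Finset.mem_insert_of_mem (Finset.mem_erase.2 ⟨hxk, hkA⟩)
    refine .head ⟨isDrDS_of_eccent_le hk hkA', x, hx.1, y, hy.2, rfl⟩ (ih hkA' ?_ ?_)
    · rw [card_insert_erase hx.1 hy.2, hcard]
    · have : B \ A.erase x = B \ A := by ext z; by_cases hz : z = x <;> simp [hz, hx.2]
      rw [Finset.sdiff_insert, this, Finset.card_erase_of_mem (Finset.mem_sdiff.2 hy), hn,
        Nat.add_sub_cancel]

lemma exists_mem_reflTransGen_tjStep {k : V} (hk : G.eccent k ≤ r) {D : Finset V}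
    (hD : IsDrDS G r ↑D) :
    ∃ A : Finset V, k ∈ A ∧ A.card = D.card ∧
      Relation.ReflTransGen (TJStep G r) D A ∧ Relation.ReflTransGen (TJStep G r) A D := by
  by_cases hkD : k ∈ D
  · exact ⟨D, hkD, rfl, .refl, .refl⟩
  obtain ⟨u, huD, -⟩ := hD k
  have hstep : TJStep G r D (insert k (D.erase u)) :=
    ⟨isDrDS_of_eccent_le hk (by simp), u, huD, k, hkD, rfl⟩
  exact ⟨_, Finset.mem_insert_self k _, card_insert_erase huD hkD,
    .single hstep, .single (hstep.symm hD)⟩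

end TokenJumping

theorem exists_tjSeq_of_radius_le {V : Type*} {G : SimpleGraph V} {r : ℕ}
    (hrad : G.radius ≤ r) {Ds Dt : Finset V} (hDs : IsDrDS G r ↑Ds) (hDt : IsDrDS G r ↑Dt)
    (hcard : Ds.card = Dt.card) :
    ∃ (q : ℕ) (Dseq : Fin (q + 1) → Finset V),
      IsTJSeq G r q Dseq ∧ Dseq 0 = Ds ∧ Dseq (Fin.last q) = Dt := by
  classical
  have : Nonempty V := by
    by_contra hV
    rw [not_nonempty_iff] at hV
    simp [SimpleGraph.radius_eq_top_of_isEmpty] at hrad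
  obtain ⟨k, hk⟩ := G.exists_eccent_eq_radius
  rw [← hk] at hrad
  obtain ⟨A, hkA, hA, hDsA, -⟩ := exists_mem_reflTransGen_tjStep hrad hDs
  obtain ⟨B, hkB, hB, -, hBDt⟩ := exists_mem_reflTransGen_tjStep hrad hDt
  have hAB := reflTransGen_tjStep_of_mem hrad hkA hkB (by rw [hA, hB, hcard])
  exact exists_tjSeq_of_reflTransGen hDs ((hDsA.trans hAB).trans hBDt)

lemma SimpleGraph.IsClique.edist_le_one {V : Type*} {G : SimpleGraph V} {K : Set V}
    (hK : G.IsClique K) {u v : V} (hu : u ∈ K) (hv : v ∈ K) : G.edist u v ≤ 1 :=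
  SimpleGraph.edist_le_one_iff_adj_or_eq.2 <|
    (eq_or_ne u v).elim .inr fun huv => .inl (hK hu hv huv)

section SplitGraph

variable {V : Type*} {G : SimpleGraph V} {K S : Set V}

lemma mem_or_mem_of_adj_of_isSplit (hpart : K ∪ S = Set.univ)
    (hS : ∀ a ∈ S, ∀ b ∈ S, ¬ G.Adj a b) {v w : V} (hvw : G.Adj v w) :
    v ∈ K ∨ w ∈ K := by
  have hmem : ∀ u, u ∈ K ∨ u ∈ S := fun u => hpart.ge (Set.mem_univ u)
  by_contra! h
  exact hS v ((hmem v).resolve_left h.1) w ((hmem w).resolve_left h.2) hvw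

lemma eccent_le_two_of_mem_clique (hpart : K ∪ S = Set.univ) (hK : G.IsClique K)
    (hS : ∀ a ∈ S, ∀ b ∈ S, ¬ G.Adj a b) (hconn : G.Connected) {k : V} (hk : k ∈ K) :
    G.eccent k ≤ 2 := by
  rw [SimpleGraph.eccent_le_iff]
  intro v
  by_cases hv : v ∈ K
  · exact (hK.edist_le_one hk hv).trans one_le_two
  have : Nontrivial V := ⟨⟨k, v, fun h => hv (h ▸ hk)⟩⟩
  obtain ⟨w, hvw⟩ := hconn.preconnected.exists_adj_of_nontrivial v
  have hw : w ∈ K := (mem_or_mem_of_adj_of_isSplit hpart hS hvw).resolve_left hv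
  calc G.edist k v ≤ G.edist k w + G.edist w v := SimpleGraph.edist_triangle
    _ ≤ 1 + 1 := by
      rw [SimpleGraph.edist_eq_one_iff_adj.2 hvw.symm]
      gcongr
      exact hK.edist_le_one hk hw
    _ = 2 := by norm_num

lemma radius_le_two_of_isSplit (hpart : K ∪ S = Set.univ) (hK : G.IsClique K)
    (hS : ∀ a ∈ S, ∀ b ∈ S, ¬ G.Adj a b) (hconn : G.Connected) : G.radius ≤ 2 := by
  obtain ⟨v⟩ := hconn.nonempty
  rcases subsingleton_or_nontrivial V with _ | _
  · exact (SimpleGraph.radius_le_eccent (u := v)).trans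
      (by simp [SimpleGraph.eccent_eq_zero_of_subsingleton])
  obtain ⟨w, hvw⟩ := hconn.preconnected.exists_adj_of_nontrivial v
  obtain ⟨k, hk⟩ : ∃ k, k ∈ K :=
    (mem_or_mem_of_adj_of_isSplit hpart hS hvw).elim (⟨v, ·⟩) (⟨w, ·⟩)
  exact SimpleGraph.radius_le_eccent.trans (eccent_le_two_of_mem_clique hpart hK hS hconn hk)

end SplitGraph

theorem stmt5_general {V : Type*} (G : SimpleGraph V) (K S : Set V)
    (hpart : K ∪ S = Set.univ)
    (hK : G.IsClique K) (hS : ∀ a ∈ S, ∀ b ∈ S, ¬ G.Adj a b)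
    (hconn : G.Connected)
    (Ds Dt : Finset V) (hDs : IsDrDS G 2 ↑Ds) (hDt : IsDrDS G 2 ↑Dt)
    (hcard : Ds.card = Dt.card) :
    ∃ (q : ℕ) (Dseq : Fin (q + 1) → Finset V),
      IsTJSeq G 2 q Dseq ∧ Dseq 0 = Ds ∧ Dseq (Fin.last q) = Dt :=
  exists_tjSeq_of_radius_le (radius_le_two_of_isSplit hpart hK hS hconn) hDs hDt hcard

theorem stmt5 {V : Type*} [Fintype V] (G : SimpleGraph V) (K S : Set V)
    (hpart : K ∪ S = Set.univ) (hdisj : Disjoint K S)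
    (hK : G.IsClique K) (hS : ∀ a ∈ S, ∀ b ∈ S, ¬ G.Adj a b)
    (hconn : G.Connected)
    (Ds Dt : Finset V) (hDs : IsDrDS G 2 ↑Ds) (hDt : IsDrDS G 2 ↑Dt)
    (hcard : Ds.card = Dt.card) :
    ∃ (q : ℕ) (Dseq : Fin (q + 1) → Finset V),
      IsTJSeq G 2 q Dseq ∧ Dseq 0 = Ds ∧ Dseq (Fin.last q) = Dt :=
  stmt5_general G K S hpart hK hS hconn Ds Dt hDs hDt hcard
end

section
/- Let G be a finite connected split graph and let D_s and D_t be two distance-2 dominating sets of G with |D_s| = |D_t|. Then every TS-sequence in G from D_s to D_t has length at least M*_TS(G,D_s,D_t), and there exists a TS-sequence in G from D_s to D_t of length at most M*_TS(G,D_s,D_t) + 2. -/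
/-- A TS-sequence of length `q` of distance-`r` dominating sets of `G`. -/
def IsTSSeq {V : Type*} (G : SimpleGraph V) (r q : ℕ)
    (Dseq : Fin (q + 1) → Finset V) : Prop :=
  (∀ i, IsDrDS G r ↑(Dseq i)) ∧
  ∀ i : Fin q, ∃ x ∈ Dseq i.castSucc, ∃ y, y ∉ Dseq i.castSucc ∧ G.Adj x y ∧
    (↑(Dseq i.succ) : Set V) = (↑(Dseq i.castSucc) \ {x}) ∪ {y}

/-- `M*_TS(G, Ds, Dt)`: the minimum over all bijections `f : Ds → Dt` of
`∑_{s ∈ Ds} dist_G(s, f s)`. -/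
noncomputable def MstarTS {V : Type*} (G : SimpleGraph V) (Ds Dt : Finset V) : ℕ :=
  sInf {m | ∃ f : ↥Ds ≃ ↥Dt, m = ∑ s : ↥Ds, G.dist (s : V) ((f s : V))}

/-!
Lower bound: a single slide changes `M*` by at most one, since relabelling the moved token costs
at most one unit of distance.

Upper bound: take an optimal matching fixing the tokens already on `Dt`. For a displaced token `a`
with target `t`, the last token on a shortest `a`–`t` path before its first empty vertex can slide
onto that vertex, and handing it `a`'s target (and `a` its old target) lowers `M*` by one. In a
split graph every set containing a clique vertex is distance-2 dominating, so such a slide can only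
fail to dominate when it moves the unique clique token `w` into `S`. Unless some other slide still
improves, every displaced token then sits on or next to `w` with its target an `S`-neighbour of `w`;
parking `w`'s token on another clique vertex `z` and routing all tokens through `w` costs two extra
moves in total.
-/

namespace TokenSliding

open Finset

variable {V : Type*} {G : SimpleGraph V}

lemma exists_adj_dist_add_one_eq (hconn : G.Connected) {u v : V} (huv : u ≠ v) :
    ∃ w, G.Adj u w ∧ G.dist w v + 1 = G.dist u v := by
  obtain ⟨p, hp⟩ := hconn.exists_walk_length_eq_dist u v
  cases p with
  | nil => exact absurd rfl huv
  | @cons _ w _ hadj q =>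
    refine ⟨_, hadj, le_antisymm ?_ ?_⟩
    · have := SimpleGraph.dist_le q
      simp only [SimpleGraph.Walk.length_cons] at hp
      omega
    · have := hconn.dist_triangle (u := u) (v := w) (w := v)
      rw [SimpleGraph.dist_eq_one_iff_adj.2 hadj] at this
      omega

noncomputable def cost (G : SimpleGraph V) {A B : Finset V} (f : ↥A ≃ ↥B) : ℕ :=
  ∑ a : ↥A, G.dist a (f a)

lemma mstar_le_cost {A B : Finset V} (f : ↥A ≃ ↥B) : MstarTS G A B ≤ cost G f :=
  Nat.sInf_le ⟨f, rfl⟩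

lemma exists_cost_eq_mstar {A B : Finset V} (h : A.card = B.card) :
    ∃ f : ↥A ≃ ↥B, cost G f = MstarTS G A B := by
  have hne : {m | ∃ f : ↥A ≃ ↥B, m = cost G f}.Nonempty :=
    ⟨_, Fintype.equivOfCardEq (by simp [h]), rfl⟩
  obtain ⟨f, hf⟩ := Nat.sInf_mem hne
  exact ⟨f, hf.symm⟩

lemma notMem_of_apply_ne {A B : Finset V} {f : ↥A ≃ ↥B}
    (hfix : ∀ a : ↥A, (a : V) ∈ B → (f a : V) = a) {a : ↥A} (ha : (f a : V) ≠ a) :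
    (f a : V) ∉ A := fun h =>
  ha (congrArg Subtype.val (f.injective (Subtype.ext (hfix ⟨_, h⟩ (f a).2))))

section Moves

variable [DecidableEq V]

lemma cost_swap_trans {A B : Finset V} (f : ↥A ≃ ↥B) (a b : ↥A) :
    cost G ((Equiv.swap a b).trans f) + G.dist a (f a) + G.dist b (f b) =
      cost G f + G.dist a (f b) + G.dist b (f a) := by
  obtain rfl | hab := eq_or_ne a b
  · simp
  unfold cost
  have hb : b ∈ (univ : Finset ↥A).erase a := mem_erase.2 ⟨hab.symm, mem_univ b⟩
  have hrest : ∀ c ∈ ((univ : Finset ↥A).erase a).erase b,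
      G.dist c ((Equiv.swap a b).trans f c) = G.dist c (f c) := by
    intro c hc
    have hcb : c ≠ b := (mem_erase.1 hc).1
    have hca : c ≠ a := (mem_erase.1 (mem_erase.1 hc).2).1
    simp [Equiv.swap_apply_of_ne_of_ne hca hcb]
  rw [← add_sum_erase _ _ (mem_univ a), ← add_sum_erase _ _ hb, sum_congr rfl hrest,
    ← add_sum_erase _ _ (mem_univ a), ← add_sum_erase _ _ hb]
  simp only [Equiv.trans_apply, Equiv.swap_apply_left, Equiv.swap_apply_right]
  ring

def moveSet (A : Finset V) (x y : V) : Finset V := insert y (A.erase x)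

lemma coe_moveSet (A : Finset V) (x y : V) : (↑(moveSet A x y) : Set V) = ↑A \ {x} ∪ {y} := by
  rw [moveSet, coe_insert, coe_erase, Set.union_singleton]

lemma mem_moveSet_self (A : Finset V) (x y : V) : y ∈ moveSet A x y := mem_insert_self _ _

lemma mem_moveSet_of_mem {A : Finset V} {x y v : V} (hv : v ∈ A) (hvx : v ≠ x) :
    v ∈ moveSet A x y :=
  mem_insert_of_mem (mem_erase.2 ⟨hvx, hv⟩)

lemma card_moveSet {A : Finset V} {x y : V} (hx : x ∈ A) (hy : y ∉ A) :
    (moveSet A x y).card = A.card := by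
  rw [moveSet, card_insert_of_notMem (fun h => hy (mem_of_mem_erase h)), card_erase_add_one hx]

lemma moveSet_moveSet {A : Finset V} {x y z : V} (hy : y ∉ A) :
    moveSet (moveSet A x y) y z = moveSet A x z := by
  rw [moveSet, moveSet, erase_insert (fun h => hy (mem_of_mem_erase h)), moveSet]

lemma moveSet_moveSet_self {A : Finset V} {x y : V} (hx : x ∈ A) (hy : y ∉ A) :
    moveSet (moveSet A x y) y x = A := by
  rw [moveSet_moveSet hy, moveSet, insert_erase hx]

def moveEquiv {A : Finset V} {x y : V} (hx : x ∈ A) (hy : y ∉ A) : ↥A ≃ ↥(moveSet A x y) :=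
  (Equiv.swap x y).subtypeEquiv fun v => by
    by_cases hvx : v = x
    · subst hvx
      simp [hx, mem_moveSet_self]
    by_cases hvy : v = y
    · subst hvy
      simp [moveSet, hy, Ne.symm hvx]
    simp [moveSet, Equiv.swap_apply_of_ne_of_ne hvx hvy, hvx, hvy]

lemma cost_moveEquiv_symm_trans {A B : Finset V} (f : ↥A ≃ ↥B) {x y : V} (hx : x ∈ A)
    (hy : y ∉ A) :
    cost G ((moveEquiv hx hy).symm.trans f) + G.dist x (f ⟨x, hx⟩) =
      cost G f + G.dist y (f ⟨x, hx⟩) := by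
  have hrest : ∀ c ∈ (univ : Finset ↥A).erase ⟨x, hx⟩,
      G.dist (moveEquiv hx hy c) (f c) = G.dist c (f c) := by
    intro c hc
    have hcx : (c : V) ≠ x := fun h => (mem_erase.1 hc).1 (Subtype.ext h)
    have hcy : (c : V) ≠ y := fun h => hy (h ▸ c.2)
    simp [moveEquiv, Equiv.swap_apply_of_ne_of_ne hcx hcy]
  have hreindex : cost G ((moveEquiv hx hy).symm.trans f) =
      ∑ c, G.dist (moveEquiv hx hy c) (f c) := by
    rw [cost, ← Equiv.sum_comp (moveEquiv hx hy)]
    simp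
  rw [hreindex, cost, ← add_sum_erase _ _ (mem_univ ⟨x, hx⟩),
    ← add_sum_erase _ _ (mem_univ ⟨x, hx⟩), sum_congr rfl hrest]
  simp only [moveEquiv, Equiv.subtypeEquiv_apply, Equiv.swap_apply_left]
  ring

lemma mstar_le_mstar_moveSet_add_one (hconn : G.Connected) {A B : Finset V} {x y : V}
    (hx : x ∈ A) (hy : y ∉ A) (hxy : G.Adj x y) (hcard : A.card = B.card) :
    MstarTS G A B ≤ MstarTS G (moveSet A x y) B + 1 := by
  have hy' : y ∈ moveSet A x y := mem_moveSet_self A x y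
  have hx' : x ∉ moveSet A x y := by simp [moveSet, hxy.ne]
  obtain ⟨g, hg⟩ := exists_cost_eq_mstar (G := G) (A := moveSet A x y) (B := B)
    (by rw [card_moveSet hx hy, hcard])
  have hslide := cost_moveEquiv_symm_trans (G := G) g hy' hx'
  have hle := mstar_le_cost (G := G) ((moveEquiv hy' hx').symm.trans g)
  have htri : G.dist x (g ⟨y, hy'⟩) ≤ G.dist x y + G.dist y (g ⟨y, hy'⟩) := hconn.dist_triangle
  rw [SimpleGraph.dist_eq_one_iff_adj.2 hxy] at htri
  have h : MstarTS G (moveSet (moveSet A x y) y x) B ≤ MstarTS G (moveSet A x y) B + 1 := by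
    omega
  rwa [moveSet_moveSet_self hx hy] at h

/-- Among optimal matchings, one with the most fixed points fixes every token already on `B`:
otherwise swapping targets with the token aimed at it keeps the cost and adds a fixed point. -/
lemma exists_optimal_fixing_inter (hconn : G.Connected) {A B : Finset V}
    (hcard : A.card = B.card) :
    ∃ f : ↥A ≃ ↥B, cost G f = MstarTS G A B ∧ ∀ a : ↥A, (a : V) ∈ B → (f a : V) = a := by
  let fixedPts : (↥A ≃ ↥B) → Finset ↥A := fun f => univ.filter fun a => (f a : V) = a
  obtain ⟨f₀, hf₀⟩ := exists_cost_eq_mstar (G := G) hcard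
  obtain ⟨f, hf, hmax⟩ := exists_max_image (univ.filter fun f => cost G f = MstarTS G A B)
    (fun f => (fixedPts f).card) ⟨f₀, by simpa using hf₀⟩
  rw [mem_filter] at hf
  refine ⟨f, hf.2, fun a haB => ?_⟩
  by_contra hfa
  set b := f.symm ⟨a, haB⟩
  have hfb : (f b : V) = a := by simp [b]
  have hba : b ≠ a := fun h => hfa (h ▸ hfb)
  have hswap := cost_swap_trans (G := G) f a b
  have htri : G.dist b (f a) ≤ G.dist b a + G.dist a (f a) := hconn.dist_triangle
  rw [hfb, SimpleGraph.dist_self] at hswap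
  have hopt : cost G ((Equiv.swap a b).trans f) = MstarTS G A B :=
    le_antisymm (by omega) (mstar_le_cost _)
  have hsub : fixedPts f ⊂ fixedPts ((Equiv.swap a b).trans f) := by
    have hsubset : fixedPts f ⊆ fixedPts ((Equiv.swap a b).trans f) := fun c hc => by
      have hc' : (f c : V) = c := (mem_filter.1 hc).2
      have hca : c ≠ a := fun h => hfa (h ▸ hc')
      have hcb : c ≠ b := fun h => hba (Subtype.ext (by rw [← hfb, ← h, hc']))
      exact mem_filter.2 ⟨mem_univ _, by simpa [Equiv.swap_apply_of_ne_of_ne hca hcb] using hc'⟩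
    exact (ssubset_iff_of_subset hsubset).2
      ⟨a, mem_filter.2 ⟨mem_univ _, by simpa using hfb⟩, fun h => hfa (mem_filter.1 h).2⟩
  have := hmax _ (mem_filter.2 ⟨mem_univ _, hopt⟩)
  exact absurd (card_lt_card hsub) (not_lt.2 this)

/-- `x` is the last token met before the first empty vertex `y` on a shortest `u`–`t` path. -/
lemma exists_slide_toward (hconn : G.Connected) {A : Finset V} {t : V} (ht : t ∉ A) {u : V}
    (hu : u ∈ A) : ∃ x ∈ A, ∃ y ∉ A, G.Adj x y ∧ G.dist u x + G.dist y t < G.dist u t := by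
  induction hd : G.dist u t using Nat.strong_induction_on generalizing u with
  | _ n ih =>
    obtain ⟨v, huv, hvt⟩ := exists_adj_dist_add_one_eq hconn (ne_of_mem_of_not_mem hu ht)
    by_cases hv : v ∈ A
    · obtain ⟨x, hx, y, hy, hxy, hlt⟩ := ih _ (by omega) hv rfl
      have := hconn.dist_triangle (u := u) (v := v) (w := x)
      rw [SimpleGraph.dist_eq_one_iff_adj.2 huv] at this
      exact ⟨x, hx, y, hy, hxy, by omega⟩
    · exact ⟨u, hu, v, hv, huv, by rw [SimpleGraph.dist_self]; omega⟩

/-- The token slid onto `y` takes over the target of `a`, and `a` takes over that of `x`; by the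
triangle inequality this changes the cost by at most `dist a x + dist y (f a) - dist a (f a)`. -/
lemma mstar_moveSet_lt (hconn : G.Connected) {A B : Finset V} (f : ↥A ≃ ↥B)
    (hf : cost G f = MstarTS G A B) (a x : ↥A) {y : V} (hy : y ∉ A)
    (h : G.dist a x + G.dist y (f a) < G.dist a (f a)) :
    MstarTS G (moveSet A x y) B < MstarTS G A B := by
  have hswap := cost_swap_trans (G := G) f a x
  have hslide := cost_moveEquiv_symm_trans (G := G) ((Equiv.swap a x).trans f) x.2 hy
  have hle := mstar_le_cost (G := G) ((moveEquiv x.2 hy).symm.trans ((Equiv.swap a x).trans f))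
  have htri : G.dist a (f x) ≤ G.dist a x + G.dist x (f x) := hconn.dist_triangle
  simp only [Subtype.coe_eta, Equiv.trans_apply, Equiv.swap_apply_right] at hslide
  omega

def extendMatching {A B : Finset V} (f : ↥A ≃ ↥B) (v : V) : V :=
  if h : v ∈ A then f ⟨v, h⟩ else v

section ExtendMatching

variable {A B : Finset V} (f : ↥A ≃ ↥B)

@[simp] lemma extendMatching_coe (a : ↥A) : extendMatching f a = f a := by
  simp [extendMatching]

lemma extendMatching_of_notMem {v : V} (hv : v ∉ A) : extendMatching f v = v := by
  simp [extendMatching, hv]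

lemma image_extendMatching : A.image (extendMatching f) = B := by
  ext b
  simp only [mem_image]
  refine ⟨fun ⟨v, hv, hb⟩ => hb ▸ extendMatching_coe f ⟨v, hv⟩ ▸ (f _).2, fun hb => ?_⟩
  exact ⟨f.symm ⟨b, hb⟩, (f.symm _).2, by simp⟩

lemma injOn_extendMatching : Set.InjOn (extendMatching f) A := fun u hu v hv h => by
  simpa [extendMatching, mem_coe.1 hu, mem_coe.1 hv] using h

lemma cost_eq_sum_extendMatching : cost G f = ∑ v ∈ A, G.dist v (extendMatching f v) := by
  rw [cost, ← sum_coe_sort A]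
  simp

end ExtendMatching

inductive TSPath (G : SimpleGraph V) (r : ℕ) : Finset V → Finset V → ℕ → Prop
  | refl {A : Finset V} : IsDrDS G r ↑A → TSPath G r A A 0
  | slide {A B : Finset V} {x y : V} {q : ℕ} : IsDrDS G r ↑A → x ∈ A → y ∉ A → G.Adj x y →
      TSPath G r (moveSet A x y) B q → TSPath G r A B (q + 1)

namespace TSPath

variable {r : ℕ}

lemma card_eq {A B : Finset V} {q : ℕ} (h : TSPath G r A B q) : A.card = B.card := by
  induction h with
  | refl => rfl
  | slide _ hx hy _ _ ih => rw [← ih, card_moveSet hx hy]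

lemma append {A B C : Finset V} {q₁ q₂ : ℕ} (h₁ : TSPath G r A B q₁) (h₂ : TSPath G r B C q₂) :
    TSPath G r A C (q₁ + q₂) := by
  induction h₁ with
  | refl => simpa using h₂
  | slide hA hx hy hxy _ ih => rw [Nat.add_right_comm]; exact slide hA hx hy hxy (ih h₂)

lemma slide_slide {A B : Finset V} {x w t : V} {q : ℕ} (hA : IsDrDS G r ↑A)
    (hAw : IsDrDS G r ↑(moveSet A x w)) (hx : x ∈ A) (hw : w ∉ A) (ht : t ∉ A)
    (hxw : G.Adj x w) (hwt : G.Adj w t) (h : TSPath G r (moveSet A x t) B q) :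
    TSPath G r A B (q + 2) :=
  slide hA hx hw hxw <| slide hAw (mem_moveSet_self A x w) (by simp [moveSet, hwt.ne', ht]) hwt <|
    by rwa [moveSet_moveSet hw]

lemma mstar_le (hconn : G.Connected) {A B : Finset V} {q : ℕ} (h : TSPath G r A B q) :
    MstarTS G A B ≤ q := by
  induction h with
  | refl => simpa [cost] using mstar_le_cost (G := G) (Equiv.refl _)
  | slide _ hx hy hxy hp ih =>
    have := mstar_le_mstar_moveSet_add_one hconn hx hy hxy
      ((card_moveSet hx hy).symm.trans hp.card_eq)
    omega

lemma iff_exists_isTSSeq {A B : Finset V} {q : ℕ} :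
    TSPath G r A B q ↔
      ∃ Dseq : Fin (q + 1) → Finset V, IsTSSeq G r q Dseq ∧ Dseq 0 = A ∧ Dseq (Fin.last q) = B := by
  induction q generalizing A with
  | zero =>
    constructor
    · rintro ⟨hA⟩
      exact ⟨fun _ => _, ⟨fun _ => hA, fun i => i.elim0⟩, rfl, rfl⟩
    · rintro ⟨Dseq, ⟨hdom, -⟩, rfl, rfl⟩
      exact refl (hdom 0)
  | succ q ih =>
    constructor
    · rintro (_ | ⟨hA, hx, hy, hxy, hp⟩)
      obtain ⟨Dseq, ⟨hdom, hmove⟩, h0, hlast⟩ := ih.1 hp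
      refine ⟨Fin.cons A Dseq, ⟨Fin.cases hA hdom, fun i => ?_⟩, rfl,
        by simpa [← Fin.succ_last] using hlast⟩
      refine Fin.cases ?_ (fun i => ?_) i
      · exact ⟨_, hx, _, hy, hxy, by simp [h0, coe_moveSet]⟩
      · simpa [← Fin.succ_castSucc] using hmove i
    · rintro ⟨Dseq, ⟨hdom, hmove⟩, rfl, rfl⟩
      obtain ⟨x, hx, y, hy, hxy, h1⟩ := hmove 0
      have htail : TSPath G r (Dseq 1) (Dseq (Fin.last (q + 1))) q :=
        ih.2 ⟨fun i => Dseq i.succ, ⟨fun i => hdom _, fun i => by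
          simpa [← Fin.succ_castSucc] using hmove i.succ⟩, rfl, by simp [← Fin.succ_last]⟩
      have h1' : Dseq 1 = moveSet (Dseq 0) x y := coe_injective (by simpa [coe_moveSet] using h1)
      exact slide (hdom 0) hx hy hxy (h1' ▸ htail)

end TSPath

lemma image_eq_sdiff_union_image {τ : V → V} {C Act : Finset V} (hAct : Act ⊆ C)
    (hfix : ∀ v ∈ C, v ∉ Act → τ v = v) : C.image τ = C \ Act ∪ Act.image τ := by
  ext v
  simp only [mem_image, mem_union, mem_sdiff]
  constructor
  · rintro ⟨u, hu, rfl⟩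
    by_cases huAct : u ∈ Act
    · exact .inr ⟨u, huAct, rfl⟩
    · rw [hfix u hu huAct]
      exact .inl ⟨hu, huAct⟩
  · rintro (⟨hv, hvAct⟩ | ⟨u, hu, rfl⟩)
    · exact ⟨v, hv, hfix v hv hvAct⟩
    · exact ⟨u, hAct hu, rfl⟩

/-- Tokens on `Act` travel one by one to their targets through the common neighbour `w`;
the token on `z` stays put, so every set visited contains `z` or `w`. -/
lemma tsPath_sdiff_union_image {r : ℕ} {z w : V} (τ : V → V)
    (hdom : ∀ D : Finset V, z ∈ D ∨ w ∈ D → IsDrDS G r ↑D) (Act : Finset V) :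
    ∀ C : Finset V, Act ⊆ C → z ∈ C → z ∉ Act → w ∉ C → Set.InjOn τ Act →
      (∀ a ∈ Act, G.Adj a w ∧ G.Adj w (τ a) ∧ τ a ∉ C) →
      TSPath G r C (C \ Act ∪ Act.image τ) (2 * Act.card) := by
  induction Act using Finset.induction_on with
  | empty => exact fun C _ hz _ _ _ _ => by simpa using TSPath.refl (hdom C (.inl hz))
  | @insert a s ha ih =>
    intro C hsub hz hzs hw hinj hact
    obtain ⟨haw, hwt, htC⟩ := hact a (mem_insert_self a s)
    have haC : a ∈ C := hsub (mem_insert_self a s)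
    have hsub' : s ⊆ moveSet C a (τ a) := fun b hb =>
      mem_moveSet_of_mem (hsub (mem_insert_of_mem hb)) (ne_of_mem_of_not_mem hb ha)
    have hz' : z ∈ moveSet C a (τ a) :=
      mem_moveSet_of_mem hz fun h => hzs (h ▸ mem_insert_self a s)
    have hw' : w ∉ moveSet C a (τ a) := by simp [moveSet, hwt.ne, hw]
    have hact' : ∀ b ∈ s, G.Adj b w ∧ G.Adj w (τ b) ∧ τ b ∉ moveSet C a (τ a) := fun b hb => by
      obtain ⟨hbw, hwtb, htbC⟩ := hact b (mem_insert_of_mem hb)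
      have hne : τ b ≠ τ a := fun h => ne_of_mem_of_not_mem hb ha
        (hinj (by simp [hb]) (by simp) h)
      exact ⟨hbw, hwtb, by simp [moveSet, hne, htbC]⟩
    have hp := ih _ hsub' hz' (fun h => hzs (mem_insert_of_mem h)) hw'
      (hinj.mono (by simp)) hact'
    have hset : moveSet C a (τ a) \ s ∪ s.image τ = C \ insert a s ∪ (insert a s).image τ := by
      ext v
      simp only [moveSet, mem_union, mem_sdiff, mem_insert, mem_erase, mem_image]
      grind
    rw [card_insert_of_notMem ha, mul_add, mul_one, ← hset]
    exact TSPath.slide_slide (hdom C (.inl hz)) (hdom _ (.inr (mem_moveSet_self C a w))) haC hw htC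
      haw hwt hp

lemma tsPath_moveSet_insert_image {r : ℕ} {A : Finset V} {w z : V} (τ : V → V)
    (hdom : ∀ D : Finset V, z ∈ D ∨ w ∈ D → IsDrDS G r ↑D) (hzA : z ∉ A)
    (hzw : z ≠ w) (hτz : τ z = z) (hinj : Set.InjOn τ A)
    (hτ : ∀ v ∈ A, v ≠ w → τ v ≠ v → G.Adj v w ∧ G.Adj w (τ v) ∧ τ v ∉ A ∧ τ v ≠ z) :
    TSPath G r (moveSet A w z) (insert z ((A.erase w).image τ))
      (2 * ((A.erase w).filter fun v => τ v ≠ v).card) := by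
  set Act := (A.erase w).filter fun v => τ v ≠ v
  have hActA : Act ⊆ A.erase w := filter_subset _ _
  have hAct : Act ⊆ moveSet A w z := hActA.trans (subset_insert _ _)
  have hp := tsPath_sdiff_union_image τ hdom Act (moveSet A w z) hAct (mem_moveSet_self A w z)
    (fun h => hzA (mem_of_mem_erase (hActA h))) (by simp [moveSet, hzw.symm])
    (hinj.mono fun v hv => mem_of_mem_erase (hActA hv)) fun a ha => by
      obtain ⟨haw, haA⟩ := mem_erase.1 (hActA ha)
      obtain ⟨haw', hwt, htA, htz⟩ := hτ a haA haw (mem_filter.1 ha).2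
      exact ⟨haw', hwt, by simp [moveSet, htA, htz]⟩
  rwa [← image_eq_sdiff_union_image hAct, moveSet, image_insert, hτz] at hp
  intro v hv hvAct
  obtain rfl | hv := mem_insert.1 hv
  · exact hτz
  · by_contra h
    exact hvAct (mem_filter.2 ⟨hv, h⟩)

lemma exists_tsPath_moveSet_via {r : ℕ} {C : Finset V} {z w t : V}
    (hdom : ∀ D : Finset V, z ∈ D ∨ w ∈ D → IsDrDS G r ↑D) (hz : z ∈ C) (hw : w ∉ C)
    (hzw : G.Adj z w) (ht : t = w ∨ G.Adj w t ∧ t ∉ C) (hfinal : IsDrDS G r ↑(moveSet C z t)) :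
    ∃ q, TSPath G r C (moveSet C z t) q ∧ q ≤ 1 + G.dist w t := by
  obtain rfl | ⟨hwt, htC⟩ := ht
  · exact ⟨1, .slide (hdom C (.inl hz)) hz hw hzw (.refl hfinal), by omega⟩
  · refine ⟨2, ?_, by rw [SimpleGraph.dist_eq_one_iff_adj.2 hwt]⟩
    exact .slide_slide (hdom C (.inl hz)) (hdom _ (.inr (mem_moveSet_self C z w))) hz hw htC hzw
      hwt (.refl hfinal)

variable (G) in
def HasImprovingSlide (r : ℕ) (A B : Finset V) : Prop :=
  ∃ x ∈ A, ∃ y ∉ A, G.Adj x y ∧ IsDrDS G r ↑(moveSet A x y) ∧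
    MstarTS G (moveSet A x y) B < MstarTS G A B

lemma exists_tsPath_le_mstar_add {r c : ℕ} {B : Finset V} (hB : IsDrDS G r ↑B)
    (hstep : ∀ A : Finset V, IsDrDS G r ↑A → A.card = B.card → A ≠ B →
      HasImprovingSlide G r A B ∨ ∃ q, TSPath G r A B q ∧ q ≤ MstarTS G A B + c)
    {A : Finset V} (hA : IsDrDS G r ↑A) (hcard : A.card = B.card) :
    ∃ q, TSPath G r A B q ∧ q ≤ MstarTS G A B + c := by
  induction hM : MstarTS G A B using Nat.strong_induction_on generalizing A with
  | _ n ih =>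
    obtain rfl | hne := eq_or_ne A B
    · exact ⟨0, .refl hA, by omega⟩
    obtain ⟨x, hx, y, hy, hxy, hdom, hlt⟩ | hpath := hstep A hA hcard hne
    · obtain ⟨q, hp, hq⟩ := ih _ (hM ▸ hlt) hdom ((card_moveSet hx hy).trans hcard) rfl
      exact ⟨q + 1, .slide hA hx hy hxy hp, by omega⟩
    · exact hM ▸ hpath

end Moves

structure IsSplitCover (G : SimpleGraph V) (K S : Set V) : Prop where
  union_eq_univ : K ∪ S = Set.univ
  isClique : G.IsClique K
  not_adj : ∀ a ∈ S, ∀ b ∈ S, ¬ G.Adj a b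

namespace IsSplitCover

variable {K S : Set V} (hG : IsSplitCover G K S) (hconn : G.Connected)

include hG

lemma mem_of_adj_of_notMem {a b : V} (ha : a ∉ K) (hab : G.Adj a b) : b ∈ K := by
  have hcover (v : V) : v ∈ K ∨ v ∈ S := by simp [← Set.mem_union, hG.union_eq_univ]
  exact (hcover b).resolve_right fun hb =>
    hG.not_adj a ((hcover a).resolve_left ha) b hb hab

lemma not_adj_of_notMem {a b : V} (ha : a ∉ K) (hb : b ∉ K) : ¬ G.Adj a b :=
  fun hab => hb (hG.mem_of_adj_of_notMem ha hab)

lemma dist_le_one {u v : V} (hu : u ∈ K) (hv : v ∈ K) : G.dist u v ≤ 1 := by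
  obtain rfl | huv := eq_or_ne u v
  · simp
  · exact (SimpleGraph.dist_eq_one_iff_adj.2 (hG.isClique hu hv huv)).le

include hconn

/-- A vertex outside the clique reaches any other vertex through a clique neighbour, which is
adjacent or equal to every clique vertex. -/
lemma dist_le_dist_of_notMem {k y t : V} (hk : k ∈ K) (hy : y ∉ K) (hyt : y ≠ t) :
    G.dist k t ≤ G.dist y t := by
  obtain ⟨v, hyv, hvt⟩ := exists_adj_dist_add_one_eq hconn hyt
  have := hconn.dist_triangle (u := k) (v := v) (w := t)
  have := hG.dist_le_one hk (hG.mem_of_adj_of_notMem hy hyv)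
  omega

lemma dist_le_two {k : V} (hk : k ∈ K) (v : V) : G.dist k v ≤ 2 := by
  by_cases hv : v ∈ K
  · have := hG.dist_le_one hk hv
    omega
  obtain rfl | hkv := eq_or_ne k v
  · simp
  obtain ⟨u, hvu, -⟩ := exists_adj_dist_add_one_eq hconn hkv.symm
  have := hconn.dist_triangle (u := k) (v := u) (w := v)
  have := hG.dist_le_one hk (hG.mem_of_adj_of_notMem hv hvu)
  have := SimpleGraph.dist_eq_one_iff_adj.2 hvu.symm
  omega

lemma isDrDS_of_mem {D : Set V} {k : V} (hkD : k ∈ D) (hk : k ∈ K) : IsDrDS G 2 D :=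
  fun v => ⟨k, hkD, hconn k v, hG.dist_le_two hconn hk v⟩

/-- With a one-vertex clique the graph is a star, of diameter at most two. -/
lemma isDrDS_of_subset_singleton {D : Set V} {w : V} (hw : w ∈ K) (hKw : K ⊆ {w})
    (hD : D.Nonempty) : IsDrDS G 2 D := by
  have hcenter (v : V) : G.dist v w ≤ 1 := by
    obtain rfl | hvw := eq_or_ne v w
    · simp
    obtain ⟨u, hvu, -⟩ := exists_adj_dist_add_one_eq hconn hvw
    have hv : v ∉ K := fun h => hvw (hKw h)
    rw [← hKw (hG.mem_of_adj_of_notMem hv hvu), SimpleGraph.dist_eq_one_iff_adj.2 hvu]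
  obtain ⟨d, hd⟩ := hD
  refine fun v => ⟨d, hd, hconn d v, ?_⟩
  have hwv : G.dist w v ≤ 1 := by
    rw [SimpleGraph.dist_comm]
    exact hcenter v
  have := hconn.dist_triangle (u := d) (v := w) (w := v)
  have := hcenter d
  omega

section SplitGraph

variable [DecidableEq V]

lemma hasImprovingSlide_or_stuck {A B : Finset V} (f : ↥A ≃ ↥B) (hf : cost G f = MstarTS G A B)
    {w : V} (hwA : w ∈ A) (hwK : w ∈ K) (hAK : ∀ v ∈ A, v ∈ K → v = w) (a : ↥A)
    (ht : (f a : V) ∉ A) :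
    HasImprovingSlide G 2 A B ∨ (f a : V) ∉ K ∧ G.Adj w (f a) ∧ ((a : V) = w ∨ G.Adj a w) := by
  obtain ⟨x, hx, y, hy, hxy, hlt⟩ := exists_slide_toward hconn ht a.2
  by_cases hgood : y ∈ K ∨ x ≠ w
  · refine .inl ⟨x, hx, y, hy, hxy, ?_, mstar_moveSet_lt hconn f hf a ⟨x, hx⟩ hy hlt⟩
    rcases hgood with hyK | hxw
    · exact hG.isDrDS_of_mem hconn (mem_moveSet_self A x y) hyK
    · exact hG.isDrDS_of_mem hconn (mem_moveSet_of_mem hwA (Ne.symm hxw)) hwK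
  push Not at hgood
  obtain ⟨hyK, rfl⟩ := hgood
  obtain rfl : y = f a := by
    by_contra hyt
    have := hG.dist_le_dist_of_notMem hconn hwK hyK hyt
    have := hconn.dist_triangle (u := (a : V)) (v := x) (w := f a)
    omega
  by_cases hax : (a : V) = x ∨ G.Adj a x
  · exact .inr ⟨hyK, hxy, hax⟩
  -- otherwise `a` has a clique neighbour `k ≠ x`, which is strictly closer to the target
  push Not at hax
  obtain ⟨hax, hnadj⟩ := hax
  obtain ⟨k, hak, -⟩ := exists_adj_dist_add_one_eq hconn (ne_of_mem_of_not_mem a.2 ht)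
  have haK : (a : V) ∉ K := fun h => hax (hAK a a.2 h)
  have hkK : k ∈ K := hG.mem_of_adj_of_notMem haK hak
  have hkA : k ∉ A := fun h => hnadj (hAK k h hkK ▸ hak)
  have hax2 := hconn.one_lt_dist_of_ne_of_not_adj hax hnadj
  have hkt := hconn.dist_triangle (u := k) (v := x) (w := f a)
  have hkx := hG.dist_le_one hkK hwK
  rw [SimpleGraph.dist_eq_one_iff_adj.2 hxy] at hkt
  refine .inl ⟨a, a.2, k, hkA, hak, hG.isDrDS_of_mem hconn (mem_moveSet_self A a k) hkK,
    mstar_moveSet_lt hconn f hf a a hkA ?_⟩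
  simp only [SimpleGraph.dist_self] at hlt ⊢
  omega

/-- Every displaced token other than `w`, and its target, lie outside the clique, hence at
distance at least two. -/
lemma dist_add_two_mul_card_le_cost {A B : Finset V} (f : ↥A ≃ ↥B) {w : V} (hwA : w ∈ A)
    (hAK : ∀ v ∈ A, v ∈ K → v = w)
    (hτK : ∀ v ∈ A, extendMatching f v ≠ v → extendMatching f v ∉ K) :
    G.dist w (extendMatching f w) +
      2 * ((A.erase w).filter fun v => extendMatching f v ≠ v).card ≤ cost G f := by
  set τ := extendMatching f
  rw [cost_eq_sum_extendMatching, ← add_sum_erase _ _ hwA]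
  gcongr
  calc 2 * ((A.erase w).filter fun v => τ v ≠ v).card
      = ∑ _v ∈ (A.erase w).filter fun v => τ v ≠ v, 2 := by
        rw [sum_const, smul_eq_mul, mul_comm]
    _ ≤ ∑ v ∈ (A.erase w).filter fun v => τ v ≠ v, G.dist v (τ v) := sum_le_sum fun v hv => by
        obtain ⟨hvA', hτv⟩ := mem_filter.1 hv
        obtain ⟨hvw, hvA⟩ := mem_erase.1 hvA'
        exact hconn.one_lt_dist_of_ne_of_not_adj (Ne.symm hτv)
          (hG.not_adj_of_notMem (fun h => hvw (hAK v hvA h)) (hτK v hvA hτv))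
    _ ≤ ∑ v ∈ A.erase w, G.dist v (τ v) := sum_le_sum_of_subset (filter_subset _ _)

/-- Park the token of `w` on another clique vertex `z`, send every other displaced token to its
target through `w` in two slides, then bring the parked token to the target of `w` through `w`:
`2 m + dist w (f w) + 2` slides for `m` displaced tokens besides `w`. -/
lemma exists_tsPath_of_stuck {A B : Finset V} (hB : IsDrDS G 2 ↑B) (f : ↥A ≃ ↥B)
    (hf : cost G f = MstarTS G A B) (hfix : ∀ a : ↥A, (a : V) ∈ B → (f a : V) = a)
    {w z : V} (hwA : w ∈ A) (hwK : w ∈ K) (hAK : ∀ v ∈ A, v ∈ K → v = w) (hzK : z ∈ K)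
    (hzw : z ≠ w)
    (hstuck : ∀ a : ↥A, (f a : V) ≠ a →
      (f a : V) ∉ K ∧ G.Adj w (f a) ∧ ((a : V) = w ∨ G.Adj a w)) :
    ∃ q, TSPath G 2 A B q ∧ q ≤ MstarTS G A B + 2 := by
  set τ := extendMatching f
  have hτ : ∀ v ∈ A, τ v ≠ v → τ v ∉ A ∧ τ v ∉ K ∧ G.Adj w (τ v) ∧ (v = w ∨ G.Adj v w) :=
    fun v hv hne => by
      simp only [τ, extendMatching, dif_pos hv] at hne ⊢
      exact ⟨notMem_of_apply_ne hfix hne, hstuck _ hne⟩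
  have hzA : z ∉ A := fun h => hzw (hAK z h hzK)
  have hτ_ne : ∀ v ∈ A, τ v ≠ z ∧ (v ≠ w → τ v ≠ w) := fun v hv => by
    by_cases hfix' : τ v = v
    · exact ⟨fun h => hzA (hfix'.symm.trans h ▸ hv), fun hvw h => hvw (hfix'.symm.trans h)⟩
    · exact ⟨fun h => (hτ v hv hfix').2.1 (h ▸ hzK), fun _ h => (hτ v hv hfix').1 (h ▸ hwA)⟩
  have hdom : ∀ D : Finset V, z ∈ D ∨ w ∈ D → IsDrDS G 2 ↑D := fun D hD =>
    hD.elim (hG.isDrDS_of_mem hconn · hzK) (hG.isDrDS_of_mem hconn · hwK)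
  have hp₁ := tsPath_moveSet_insert_image τ hdom hzA hzw (extendMatching_of_notMem f hzA)
    (injOn_extendMatching f) fun v hv hvw hne => by
      obtain ⟨htA, -, hwt, hvw'⟩ := hτ v hv hne
      exact ⟨hvw'.resolve_left hvw, hwt, htA, (hτ_ne v hv).1⟩
  set C := insert z ((A.erase w).image τ)
  have hBC : B = moveSet C z (τ w) := by
    rw [moveSet, erase_insert (by simpa using fun v _ hv => (hτ_ne v hv).1), ← image_insert,
      insert_erase hwA, image_extendMatching]
  have hwC : w ∉ C := by
    simpa [C, hzw.symm] using fun v hvw hv => (hτ_ne v hv).2 hvw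
  have htC : τ w ∉ C := by
    simpa [C, (hτ_ne w hwA).1] using fun v hvw hv h =>
      hvw (injOn_extendMatching f (mem_coe.2 hv) (mem_coe.2 hwA) h)
  obtain ⟨q₂, hp₂, hq₂⟩ := exists_tsPath_moveSet_via hdom (mem_insert_self z _) hwC
    (hG.isClique hzK hwK hzw) ((em (τ w = w)).imp_right fun h => ⟨(hτ w hwA h).2.2.1, htC⟩)
    (hBC ▸ hB)
  have hcost : G.dist w (τ w) + 2 * ((A.erase w).filter fun v => τ v ≠ v).card ≤
      MstarTS G A B :=
    hf ▸ hG.dist_add_two_mul_card_le_cost hconn f hwA hAK fun v hv h => (hτ v hv h).2.1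
  refine ⟨_, .slide (hdom A (.inr hwA)) hwA hzA (hG.isClique hwK hzK hzw.symm)
    (hp₁.append (hBC ▸ hp₂)), ?_⟩
  omega

lemma hasImprovingSlide_or_exists_tsPath {A B : Finset V} (hB : IsDrDS G 2 ↑B)
    (hcard : A.card = B.card) (hne : A ≠ B) :
    HasImprovingSlide G 2 A B ∨ ∃ q, TSPath G 2 A B q ∧ q ≤ MstarTS G A B + 2 := by
  obtain ⟨f, hf, hfix⟩ := exists_optimal_fixing_inter hconn hcard
  by_cases hgood : HasImprovingSlide G 2 A B
  · exact .inl hgood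
  obtain ⟨a, ha⟩ : ∃ a : ↥A, (f a : V) ≠ a := by
    by_contra! h
    exact hne (eq_of_subset_of_card_le (fun v hv => by simpa [h ⟨v, hv⟩] using (f ⟨v, hv⟩).2)
      hcard.ge)
  obtain ⟨x, hx, y, hy, hxy, hlt⟩ := exists_slide_toward hconn (notMem_of_apply_ne hfix ha) a.2
  have hnot : ¬ IsDrDS G 2 ↑(moveSet A x y) := fun hdom =>
    hgood ⟨x, hx, y, hy, hxy, hdom, mstar_moveSet_lt hconn f hf a ⟨x, hx⟩ hy hlt⟩
  have hyK : y ∉ K := fun h => hnot (hG.isDrDS_of_mem hconn (mem_moveSet_self A x y) h)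
  have hxK : x ∈ K := not_not.1 fun h => hyK (hG.mem_of_adj_of_notMem h hxy)
  have hAK : ∀ v ∈ A, v ∈ K → v = x := fun v hv hvK => by_contra fun hvx =>
    hnot (hG.isDrDS_of_mem hconn (mem_moveSet_of_mem hv hvx) hvK)
  obtain ⟨z, hzK, hzx⟩ : ∃ z ∈ K, z ≠ x := by
    by_contra! h
    exact hnot (hG.isDrDS_of_subset_singleton hconn hxK h ⟨y, mem_moveSet_self A x y⟩)
  refine .inr <| hG.exists_tsPath_of_stuck hconn hB f hf hfix hx hxK hAK hzK hzx fun a' ha' => ?_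
  exact (hG.hasImprovingSlide_or_stuck hconn f hf hx hxK hAK a'
    (notMem_of_apply_ne hfix ha')).resolve_left hgood

end SplitGraph

end IsSplitCover

end TokenSliding

theorem stmt6_general {V : Type*} (G : SimpleGraph V) (K S : Set V)
    (hpart : K ∪ S = Set.univ)
    (hK : G.IsClique K) (hS : ∀ a ∈ S, ∀ b ∈ S, ¬ G.Adj a b)
    (hconn : G.Connected)
    (Ds Dt : Finset V) (hDs : IsDrDS G 2 ↑Ds) (hDt : IsDrDS G 2 ↑Dt)
    (hcard : Ds.card = Dt.card) :
    (∀ (q : ℕ) (Dseq : Fin (q + 1) → Finset V), IsTSSeq G 2 q Dseq →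
        Dseq 0 = Ds → Dseq (Fin.last q) = Dt → MstarTS G Ds Dt ≤ q) ∧
    (∃ (q : ℕ) (Dseq : Fin (q + 1) → Finset V), IsTSSeq G 2 q Dseq ∧
        Dseq 0 = Ds ∧ Dseq (Fin.last q) = Dt ∧ q ≤ MstarTS G Ds Dt + 2) := by
  classical
  have hG : TokenSliding.IsSplitCover G K S := ⟨hpart, hK, hS⟩
  refine ⟨fun q Dseq hseq h0 hlast => ?_, ?_⟩
  · exact (TokenSliding.TSPath.iff_exists_isTSSeq.2 ⟨Dseq, hseq, h0, hlast⟩).mstar_le hconn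
  · obtain ⟨q, hp, hq⟩ := TokenSliding.exists_tsPath_le_mstar_add hDt
      (fun _ _ hA hne => hG.hasImprovingSlide_or_exists_tsPath hconn hDt hA hne) hDs hcard
    obtain ⟨Dseq, hseq, h0, hlast⟩ := TokenSliding.TSPath.iff_exists_isTSSeq.1 hp
    exact ⟨q, Dseq, hseq, h0, hlast, hq⟩

theorem stmt6 {V : Type*} [Fintype V] (G : SimpleGraph V) (K S : Set V)
    (hpart : K ∪ S = Set.univ) (hdisj : Disjoint K S)
    (hK : G.IsClique K) (hS : ∀ a ∈ S, ∀ b ∈ S, ¬ G.Adj a b)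
    (hconn : G.Connected)
    (Ds Dt : Finset V) (hDs : IsDrDS G 2 ↑Ds) (hDt : IsDrDS G 2 ↑Dt)
    (hcard : Ds.card = Dt.card) :
    (∀ (q : ℕ) (Dseq : Fin (q + 1) → Finset V), IsTSSeq G 2 q Dseq →
        Dseq 0 = Ds → Dseq (Fin.last q) = Dt → MstarTS G Ds Dt ≤ q) ∧
    (∃ (q : ℕ) (Dseq : Fin (q + 1) → Finset V), IsTSSeq G 2 q Dseq ∧
        Dseq 0 = Ds ∧ Dseq (Fin.last q) = Dt ∧ q ≤ MstarTS G Ds Dt + 2) :=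
  stmt6_general G K S hpart hK hS hconn Ds Dt hDs hDt hcard
end

section
/- Let G be a finite connected split graph and let D_s and D_t be two distance-2 dominating sets of G with |D_s| = |D_t|. Then every TJ-sequence in G from D_s to D_t has length at least |D_s Δ D_t|/2, and there exists a TJ-sequence in G from D_s to D_t of length at most |D_s Δ D_t|/2 + 1. -/
/-- Half the cardinality of the symmetric difference of two finite vertex sets. -/
noncomputable def halfSymmDiff {V : Type*} (Ds Dt : Finset V) : ℕ :=
  (((↑Ds : Set V) \ ↑Dt) ∪ ((↑Dt : Set V) \ ↑Ds)).ncard / 2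

section Aux

set_option linter.unusedSectionVars false

variable {V : Type*} [Fintype V] {G : SimpleGraph V}

/-- The (unhalved) cardinality of the symmetric difference. -/
noncomputable def sdn {V' : Type*} (A B : Finset V') : ℕ :=
  (((↑A : Set V') \ ↑B) ∪ ((↑B : Set V') \ ↑A)).ncard

lemma adj_le_one {a b : V} (h : G.Adj a b) : G.dist a b ≤ 1 :=
  le_of_eq (SimpleGraph.dist_eq_one_iff_adj.mpr h)

lemma dist_le_one_of_clique {K : Set V} (hK : G.IsClique K)
    {a b : V} (ha : a ∈ K) (hb : b ∈ K) : G.dist a b ≤ 1 := by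
  by_cases hab : a = b
  · simp [hab, SimpleGraph.dist_self]
  · exact adj_le_one (hK ha hb hab)

/-- In a connected split graph, there is a vertex within distance 2 of everything. -/
lemma exists_univ_dom (G : SimpleGraph V) (K S : Set V)
    (hpart : K ∪ S = Set.univ) (_hdisj : Disjoint K S)
    (hK : G.IsClique K) (hS : ∀ a ∈ S, ∀ b ∈ S, ¬ G.Adj a b)
    (hconn : G.Connected) :
    ∃ c : V, ∀ v : V, G.Reachable c v ∧ G.dist c v ≤ 2 := by
  have hmem : ∀ v : V, v ∈ K ∨ v ∈ S := by
    intro v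
    have : v ∈ K ∪ S := by rw [hpart]; exact Set.mem_univ v
    exact this
  by_cases hKne : K.Nonempty
  · obtain ⟨c, hc⟩ := hKne
    refine ⟨c, fun v => ⟨hconn.preconnected c v, ?_⟩⟩
    rcases hmem v with hvK | hvS
    · exact le_trans (dist_le_one_of_clique hK hc hvK) (by norm_num)
    · by_cases hvc : v = c
      · simp [hvc, SimpleGraph.dist_self]
      obtain ⟨p⟩ := hconn.preconnected v c
      have hnil : ¬ p.Nil := fun h => hvc h.eq
      have hadj : G.Adj v (p.getVert 1) := p.adj_snd hnil
      have hwK : p.getVert 1 ∈ K := by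
        rcases hmem (p.getVert 1) with h | h
        · exact h
        · exact absurd hadj (hS v hvS _ h)
      calc G.dist c v ≤ G.dist c (p.getVert 1) + G.dist (p.getVert 1) v :=
            hconn.dist_triangle
        _ ≤ 1 + 1 := add_le_add (dist_le_one_of_clique hK hc hwK) (adj_le_one hadj.symm)
        _ = 2 := rfl
  · push_neg at hKne
    have hSuniv : ∀ v : V, v ∈ S := fun v => (hmem v).resolve_left (by simp [hKne])
    have hsub : ∀ u v : V, u = v := by
      intro u v
      by_contra hne
      obtain ⟨p⟩ := hconn.preconnected u v
      have hnil : ¬ p.Nil := fun h => hne h.eq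
      exact hS u (hSuniv u) _ (hSuniv _) (p.adj_snd hnil)
    obtain ⟨c⟩ := hconn.nonempty
    exact ⟨c, fun v => by
      rw [hsub v c]
      exact ⟨SimpleGraph.Reachable.refl c, by simp [SimpleGraph.dist_self]⟩⟩

lemma sdn_self (B : Finset V) : sdn B B = 0 := by
  unfold sdn; simp

lemma sdn_eq [DecidableEq V] (A B : Finset V) :
    sdn A B = (A \ B).card + (B \ A).card := by
  unfold sdn
  rw [← Finset.coe_sdiff, ← Finset.coe_sdiff,
    Set.ncard_union_eq ?hd (Set.toFinite _) (Set.toFinite _),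
    Set.ncard_coe_finset, Set.ncard_coe_finset]
  case hd =>
    rw [Set.disjoint_left]
    intro v hv hv'
    simp only [Finset.coe_sdiff, Set.mem_diff, Finset.mem_coe] at hv hv'
    exact hv.2 hv'.1

lemma sdn_step (A A' B : Finset V) (x y : V)
    (h : (↑A' : Set V) = ↑A \ {x} ∪ {y}) :
    sdn A B ≤ sdn A' B + 2 := by
  have hsub : (((↑A : Set V) \ ↑B) ∪ ((↑B : Set V) \ ↑A))
      ⊆ ((((↑A' : Set V) \ ↑B) ∪ ((↑B : Set V) \ ↑A')) ∪ {x, y}) := by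
    intro v hv
    by_cases hx : v = x
    · right; simp [hx]
    by_cases hy : v = y
    · right; simp [hy]
    left
    have hiff : v ∈ (↑A' : Set V) ↔ v ∈ (↑A : Set V) := by
      rw [h]; simp [hx, hy]
    rcases hv with ⟨hvA, hvB⟩ | ⟨hvB, hvA⟩
    · exact Or.inl ⟨hiff.mpr hvA, hvB⟩
    · exact Or.inr ⟨hvB, fun hc => hvA (hiff.mp hc)⟩
  calc sdn A B ≤ ((((↑A' : Set V) \ ↑B) ∪ ((↑B : Set V) \ ↑A')) ∪ {x, y}).ncard :=
        Set.ncard_le_ncard hsub (Set.toFinite _)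
    _ ≤ (((↑A' : Set V) \ ↑B) ∪ ((↑B : Set V) \ ↑A')).ncard + ({x, y} : Set V).ncard :=
        Set.ncard_union_le _ _
    _ ≤ sdn A' B + 2 := by
        have : ({x, y} : Set V).ncard ≤ 2 := by
          refine le_trans (Set.ncard_insert_le _ _) ?_
          simp
        unfold sdn; omega

lemma lower_bound (Dt : Finset V) :
    ∀ (q : ℕ) (Dseq : Fin (q + 1) → Finset V), IsTJSeq G 2 q Dseq →
      Dseq (Fin.last q) = Dt → sdn (Dseq 0) Dt ≤ 2 * q := by
  intro q Dseq hseq hlast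
  have key : ∀ k j (hj : j + k = q), sdn (Dseq ⟨j, by omega⟩) Dt ≤ 2 * k := by
    intro k
    induction k with
    | zero =>
        intro j hj
        have : (⟨j, by omega⟩ : Fin (q + 1)) = Fin.last q := by
          apply Fin.ext; simp; omega
        rw [this, hlast, sdn_self]
    | succ k ih =>
        intro j hj
        have hjq : j < q := by omega
        obtain ⟨x, hx, y, hy, heq⟩ := hseq.2 ⟨j, hjq⟩
        have e1 : (Fin.castSucc ⟨j, hjq⟩ : Fin (q + 1)) = ⟨j, by omega⟩ := rfl
        have e2 : (Fin.succ ⟨j, hjq⟩ : Fin (q + 1)) = ⟨j + 1, by omega⟩ := rfl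
        rw [e1, e2] at heq
        calc sdn (Dseq ⟨j, by omega⟩) Dt ≤ sdn (Dseq ⟨j + 1, by omega⟩) Dt + 2 :=
              sdn_step _ _ _ x y heq
          _ ≤ 2 * k + 2 := by have := ih (j + 1) (by omega); omega
          _ = 2 * (k + 1) := by ring
  have := key q 0 (by omega)
  have e0 : (⟨0, by omega⟩ : Fin (q + 1)) = 0 := rfl
  rwa [e0] at this

lemma prepend_seq {r q : ℕ} (D0 : Finset V) (seq : Fin (q + 1) → Finset V)
    (hseq : IsTJSeq G r q seq) (hD0 : IsDrDS G r ↑D0)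
    (hmove : ∃ x ∈ D0, ∃ y, y ∉ D0 ∧ (↑(seq 0) : Set V) = (↑D0 \ {x}) ∪ {y}) :
    ∃ seq' : Fin (q + 2) → Finset V, IsTJSeq G r (q + 1) seq' ∧
      seq' 0 = D0 ∧ seq' (Fin.last (q + 1)) = seq (Fin.last q) := by
  refine ⟨Fin.cases D0 seq, ⟨?_, ?_⟩, by simp, ?_⟩
  · intro i
    induction i using Fin.cases with
    | zero => simpa using hD0
    | succ j => simpa using hseq.1 j
  · intro i
    induction i using Fin.cases with
    | zero =>
        have h0 : (Fin.castSucc (0 : Fin (q + 1))) = (0 : Fin (q + 2)) := rfl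
        simp only [Fin.cases_succ]; simpa [h0] using hmove
    | succ j =>
        obtain ⟨x, hx, y, hy, heq⟩ := hseq.2 j
        refine ⟨x, ?_, y, ?_, ?_⟩
        · simpa [Fin.castSucc_fin_succ] using hx
        · simpa [Fin.castSucc_fin_succ] using hy
        · have e1 : (Fin.succ j).succ = Fin.succ (j.succ) := rfl
          simpa [Fin.castSucc_fin_succ, e1, Fin.cases_succ] using heq
  · have : Fin.last (q + 1) = Fin.succ (Fin.last q) := by simp [Fin.succ_last]
    rw [this]
    exact Fin.cases_succ _

lemma append_seq {r q : ℕ} (seq : Fin (q + 1) → Finset V) (Dlast : Finset V)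
    (hseq : IsTJSeq G r q seq) (hDlast : IsDrDS G r ↑Dlast)
    (hmove : ∃ x ∈ seq (Fin.last q), ∃ y, y ∉ seq (Fin.last q) ∧
      (↑Dlast : Set V) = (↑(seq (Fin.last q)) \ {x}) ∪ {y}) :
    ∃ seq' : Fin (q + 2) → Finset V, IsTJSeq G r (q + 1) seq' ∧
      seq' 0 = seq 0 ∧ seq' (Fin.last (q + 1)) = Dlast := by
  refine ⟨Fin.lastCases Dlast (fun i => seq i), ⟨?_, ?_⟩, ?_, by simp⟩
  · intro i
    induction i using Fin.lastCases with
    | last => simpa using hDlast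
    | cast j => simpa using hseq.1 j
  · intro i
    induction i using Fin.lastCases with
    | last =>
        have h2 : Fin.succ (Fin.last q) = Fin.last (q + 1) := Fin.succ_last q
        rw [h2]
        have e1 : (Fin.lastCases Dlast (fun i => seq i) : Fin (q+2) → Finset V)
            (Fin.castSucc (Fin.last q)) = seq (Fin.last q) := by simp
        have e2 : (Fin.lastCases Dlast (fun i => seq i) : Fin (q+2) → Finset V)
            (Fin.last (q + 1)) = Dlast := by simp
        rw [e1, e2]
        exact hmove
    | cast j =>
        obtain ⟨x, hx, y, hy, heq⟩ := hseq.2 j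
        have e1 : (Fin.castSucc j).castSucc = Fin.castSucc (j.castSucc) := rfl
        have e2 : (Fin.castSucc j).succ = Fin.castSucc (j.succ) := (Fin.succ_castSucc j).symm
        refine ⟨x, ?_, y, ?_, ?_⟩
        · rw [e1]; simpa using hx
        · rw [e1]; simpa using hy
        · rw [e1, e2]; simp only [Fin.lastCases_castSucc]; simpa using heq
  · exact Fin.lastCases_castSucc (motive := fun _ => Finset V) (i := 0)

lemma dom_of_mem {c : V} (hc : ∀ v : V, G.Reachable c v ∧ G.dist c v ≤ 2)
    {D : Finset V} (hcD : c ∈ D) : IsDrDS G 2 ↑D :=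
  fun v => ⟨c, by exact_mod_cast hcD, (hc v).1, (hc v).2⟩

lemma helper_seq [DecidableEq V] {c : V}
    (hc : ∀ v : V, G.Reachable c v ∧ G.dist c v ≤ 2) :
    ∀ n (A B : Finset V), (A \ B).card = n → A.card = B.card → c ∈ A → c ∈ B →
    ∃ Dseq : Fin (n + 1) → Finset V, IsTJSeq G 2 n Dseq ∧
      Dseq 0 = A ∧ Dseq (Fin.last n) = B := by
  intro n
  induction n with
  | zero =>
      intro A B hd hcard hcA hcB
      have hAB : A = B := by
        have hsub : A ⊆ B := by
          intro a ha
          by_contra hb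
          have : a ∈ A \ B := Finset.mem_sdiff.mpr ⟨ha, hb⟩
          rw [Finset.card_eq_zero] at hd
          simp [hd] at this
        exact Finset.eq_of_subset_of_card_le hsub (le_of_eq hcard.symm)
      exact ⟨fun _ => A, ⟨fun _ => dom_of_mem hc hcA, fun i => i.elim0⟩, rfl, hAB ▸ rfl⟩
  | succ n ih =>
      intro A B hd hcard hcA hcB
      have hABne : (A \ B).Nonempty := by
        rw [← Finset.card_pos, hd]; omega
      obtain ⟨x, hx⟩ := hABne
      have hBAcard : (B \ A).card = n + 1 := by
        rw [← hd]; exact (Finset.card_sdiff_comm hcard).symm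
      have hBAne : (B \ A).Nonempty := by rw [← Finset.card_pos, hBAcard]; omega
      obtain ⟨y, hy⟩ := hBAne
      obtain ⟨hxA, hxB⟩ := Finset.mem_sdiff.mp hx
      obtain ⟨hyB, hyA⟩ := Finset.mem_sdiff.mp hy
      set A' := insert y (A.erase x) with hA'
      have hcx : c ≠ x := fun h => hxB (h ▸ hcB)
      have hcA' : c ∈ A' := Finset.mem_insert.mpr (Or.inr (Finset.mem_erase.mpr ⟨hcx, hcA⟩))
      have hyAe : y ∉ A.erase x := fun h => hyA (Finset.mem_of_mem_erase h)
      have hA'card : A'.card = B.card := by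
        rw [hA', Finset.card_insert_of_notMem hyAe, Finset.card_erase_of_mem hxA, ← hcard]
        have : 0 < A.card := Finset.card_pos.mpr ⟨x, hxA⟩
        omega
      have hA'B : A' \ B = (A \ B).erase x := by
        ext v
        simp only [hA', Finset.mem_sdiff, Finset.mem_insert, Finset.mem_erase]
        constructor
        · rintro ⟨hv | ⟨hvx, hvA⟩, hvB⟩
          · exact absurd (hv ▸ hyB) hvB
          · exact ⟨hvx, hvA, hvB⟩
        · rintro ⟨hvx, hvA, hvB⟩
          exact ⟨Or.inr ⟨hvx, hvA⟩, hvB⟩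
      have hA'Bcard : (A' \ B).card = n := by
        rw [hA'B, Finset.card_erase_of_mem hx, hd]; omega
      obtain ⟨seq, hseq, h0, hl⟩ := ih A' B hA'Bcard hA'card hcA' hcB
      have hmove : ∃ x' ∈ A, ∃ y', y' ∉ A ∧ (↑(seq 0) : Set V) = (↑A \ {x'}) ∪ {y'} := by
        refine ⟨x, hxA, y, hyA, ?_⟩
        rw [h0, hA']
        ext v
        simp only [Finset.coe_insert, Set.mem_insert_iff, Finset.coe_erase, Set.mem_diff,
          Set.mem_union, Set.mem_singleton_iff, Finset.mem_coe]
        tauto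
      obtain ⟨seq', hseq', h0', hl'⟩ := prepend_seq A seq hseq (dom_of_mem hc hcA) hmove
      exact ⟨seq', hseq', h0', by rw [hl', hl]⟩

/-- The move from `D` to `insert c (D.erase x₀)`. -/
lemma move_in [DecidableEq V] {D : Finset V} {c x₀ : V} (hc : c ∉ D) (hx : x₀ ∈ D) :
    ∃ x ∈ D, ∃ y, y ∉ D ∧
      (↑(insert c (D.erase x₀)) : Set V) = (↑D \ {x}) ∪ {y} := by
  refine ⟨x₀, hx, c, hc, ?_⟩
  ext v
  simp only [Finset.coe_insert, Set.mem_insert_iff, Finset.coe_erase, Set.mem_diff,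
    Set.mem_union, Set.mem_singleton_iff, Finset.mem_coe]
  tauto

/-- The move from `insert c (D.erase x₀)` back to `D`. -/
lemma move_out [DecidableEq V] {D : Finset V} {c x₀ : V} (hc : c ∉ D) (hx : x₀ ∈ D) :
    ∃ x ∈ insert c (D.erase x₀), ∃ y, y ∉ insert c (D.erase x₀) ∧
      (↑D : Set V) = (↑(insert c (D.erase x₀)) \ {x}) ∪ {y} := by
  have hx₀c : x₀ ≠ c := fun h => hc (h ▸ hx)
  refine ⟨c, Finset.mem_insert_self _ _, x₀, ?_, ?_⟩
  · simp [hx₀c]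
  · ext v
    simp only [Finset.coe_insert, Set.mem_insert_iff, Finset.coe_erase, Set.mem_diff,
      Set.mem_union, Set.mem_singleton_iff, Finset.mem_coe]
    constructor
    · intro hv
      by_cases hvx : v = x₀
      · tauto
      · exact Or.inl ⟨Or.inr ⟨hv, hvx⟩, fun h => hc (by rw [← h]; exact hv)⟩
    · rintro (⟨hv | ⟨hv, _⟩, hvc⟩ | hv)
      · exact absurd hv hvc
      · exact hv
      · rw [hv]; exact hx

lemma prime_card [DecidableEq V] {D : Finset V} {c x₀ : V} (hc : c ∉ D) (hx : x₀ ∈ D) :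
    (insert c (D.erase x₀)).card = D.card := by
  have hce : c ∉ D.erase x₀ := fun h => hc (Finset.mem_of_mem_erase h)
  rw [Finset.card_insert_of_notMem hce, Finset.card_erase_of_mem hx]
  have : 0 < D.card := Finset.card_pos.mpr ⟨x₀, hx⟩
  omega

end Aux

theorem stmt7 {V : Type*} [Fintype V] (G : SimpleGraph V) (K S : Set V)
    (hpart : K ∪ S = Set.univ) (hdisj : Disjoint K S)
    (hK : G.IsClique K) (hS : ∀ a ∈ S, ∀ b ∈ S, ¬ G.Adj a b)
    (hconn : G.Connected)
    (Ds Dt : Finset V) (hDs : IsDrDS G 2 ↑Ds) (hDt : IsDrDS G 2 ↑Dt)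
    (hcard : Ds.card = Dt.card) :
    (∀ (q : ℕ) (Dseq : Fin (q + 1) → Finset V), IsTJSeq G 2 q Dseq →
        Dseq 0 = Ds → Dseq (Fin.last q) = Dt → halfSymmDiff Ds Dt ≤ q) ∧
    (∃ (q : ℕ) (Dseq : Fin (q + 1) → Finset V), IsTJSeq G 2 q Dseq ∧
        Dseq 0 = Ds ∧ Dseq (Fin.last q) = Dt ∧ q ≤ halfSymmDiff Ds Dt + 1) := by
  classical
  have hhsd : halfSymmDiff Ds Dt = sdn Ds Dt / 2 := rfl
  have hdd : (Dt \ Ds).card = (Ds \ Dt).card := Finset.card_sdiff_comm hcard.symm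
  set d := (Ds \ Dt).card with hdef
  have hsdn : sdn Ds Dt = 2 * d := by rw [sdn_eq, hdd]; omega
  constructor
  · intro q Dseq hseq h0 hlast
    have := lower_bound Dt q Dseq hseq hlast
    rw [h0, hsdn] at this
    rw [hhsd, hsdn]
    omega
  · by_cases hEq : Ds = Dt
    · refine ⟨0, fun _ => Ds, ⟨fun _ => hDs, fun i => i.elim0⟩, rfl, hEq ▸ rfl, by omega⟩
    · -- Ds ≠ Dt, so d ≥ 1
      have hdpos : 1 ≤ d := by
        by_contra h
        have hd0 : (Ds \ Dt).card = 0 := by omega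
        have hsub : Ds ⊆ Dt := by
          intro a ha
          by_contra hb
          have : a ∈ Ds \ Dt := Finset.mem_sdiff.mpr ⟨ha, hb⟩
          rw [Finset.card_eq_zero] at hd0
          simp [hd0] at this
        exact hEq (Finset.eq_of_subset_of_card_le hsub (le_of_eq hcard.symm))
      obtain ⟨c, hc⟩ := exists_univ_dom G K S hpart hdisj hK hS hconn
      have hDsDtne : (Ds \ Dt).Nonempty := by rw [← Finset.card_pos]; omega
      have hDtDsne : (Dt \ Ds).Nonempty := by rw [← Finset.card_pos]; omega
      have hhalf : halfSymmDiff Ds Dt = d := by rw [hhsd, hsdn]; omega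
      by_cases hcDs : c ∈ Ds <;> by_cases hcDt : c ∈ Dt
      · -- c in both: helper directly, length d
        obtain ⟨seq, hseq, h0, hl⟩ := helper_seq hc d Ds Dt rfl hcard hcDs hcDt
        exact ⟨d, seq, hseq, h0, hl, by omega⟩
      · -- c ∈ Ds, c ∉ Dt : helper Ds → Dt' (length d-1), append move to Dt
        obtain ⟨y₀, hy₀⟩ := hDtDsne
        obtain ⟨hy₀Dt, hy₀Ds⟩ := Finset.mem_sdiff.mp hy₀
        set Dt' := insert c (Dt.erase y₀) with hDt'
        have hcDt' : c ∈ Dt' := Finset.mem_insert_self _ _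
        have hDt'card : Ds.card = Dt'.card := by rw [prime_card hcDt hy₀Dt]; exact hcard
        have hDsDt' : Ds \ Dt' = (Ds \ Dt).erase c := by
          ext v
          constructor
          · intro hv
            obtain ⟨hvDs, hvn⟩ := Finset.mem_sdiff.mp hv
            have hvc : v ≠ c := fun h => hvn (by rw [h]; exact hcDt')
            refine Finset.mem_erase.mpr ⟨hvc, Finset.mem_sdiff.mpr ⟨hvDs, fun hvDt => hvn ?_⟩⟩
            have hvy : v ≠ y₀ := fun h => hy₀Ds (by rw [← h]; exact hvDs)
            exact Finset.mem_insert.mpr (Or.inr (Finset.mem_erase.mpr ⟨hvy, hvDt⟩))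
          · intro hv
            obtain ⟨hvc, hv2⟩ := Finset.mem_erase.mp hv
            obtain ⟨hvDs, hvDt⟩ := Finset.mem_sdiff.mp hv2
            refine Finset.mem_sdiff.mpr ⟨hvDs, fun hvin => ?_⟩
            rcases Finset.mem_insert.mp hvin with h | h
            · exact hvc h
            · exact hvDt (Finset.mem_of_mem_erase h)
        have hcDsDt : c ∈ Ds \ Dt := Finset.mem_sdiff.mpr ⟨hcDs, hcDt⟩
        have hDsDt'card : (Ds \ Dt').card = d - 1 := by
          rw [hDsDt', Finset.card_erase_of_mem hcDsDt]
        obtain ⟨seq, hseq, h0, hl⟩ :=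
          helper_seq hc (d - 1) Ds Dt' hDsDt'card hDt'card hcDs hcDt'
        obtain ⟨seq', hseq', h0', hl'⟩ := append_seq seq Dt hseq hDt (by
          rw [hl, hDt']; exact move_out hcDt hy₀Dt)
        refine ⟨d - 1 + 1, seq', hseq', by rw [h0', h0], hl', by omega⟩
      · -- c ∉ Ds, c ∈ Dt : prepend move Ds → Ds', helper Ds' → Dt (length d-1)
        obtain ⟨x₀, hx₀⟩ := hDsDtne
        obtain ⟨hx₀Ds, hx₀Dt⟩ := Finset.mem_sdiff.mp hx₀
        set Ds' := insert c (Ds.erase x₀) with hDs'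
        have hcDs' : c ∈ Ds' := Finset.mem_insert_self _ _
        have hDs'card : Ds'.card = Dt.card := by rw [prime_card hcDs hx₀Ds]; exact hcard
        have hDs'Dt : Ds' \ Dt = (Ds \ Dt).erase x₀ := by
          ext v
          simp only [hDs', Finset.mem_sdiff, Finset.mem_insert, Finset.mem_erase]
          constructor
          · rintro ⟨hv | ⟨hvx, hvDs⟩, hvDt⟩
            · exact absurd (hv ▸ hcDt) hvDt
            · exact ⟨hvx, hvDs, hvDt⟩
          · rintro ⟨hvx, hvDs, hvDt⟩
            exact ⟨Or.inr ⟨hvx, hvDs⟩, hvDt⟩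
        have hDs'Dtcard : (Ds' \ Dt).card = d - 1 := by
          rw [hDs'Dt, Finset.card_erase_of_mem hx₀]
        obtain ⟨seq, hseq, h0, hl⟩ :=
          helper_seq hc (d - 1) Ds' Dt hDs'Dtcard hDs'card hcDs' hcDt
        obtain ⟨seq', hseq', h0', hl'⟩ := prepend_seq Ds seq hseq hDs (by
          rw [h0, hDs']; exact move_in hcDs hx₀Ds)
        refine ⟨d - 1 + 1, seq', hseq', h0', by rw [hl', hl], by omega⟩
      · -- c ∉ Ds, c ∉ Dt : prepend and append, helper length d-1, total d+1
        obtain ⟨x₀, hx₀⟩ := hDsDtne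
        obtain ⟨hx₀Ds, hx₀Dt⟩ := Finset.mem_sdiff.mp hx₀
        obtain ⟨y₀, hy₀⟩ := hDtDsne
        obtain ⟨hy₀Dt, hy₀Ds⟩ := Finset.mem_sdiff.mp hy₀
        set Ds' := insert c (Ds.erase x₀) with hDs'
        set Dt' := insert c (Dt.erase y₀) with hDt'
        have hcDs' : c ∈ Ds' := Finset.mem_insert_self _ _
        have hcDt' : c ∈ Dt' := Finset.mem_insert_self _ _
        have hcards : Ds'.card = Dt'.card := by
          rw [prime_card hcDs hx₀Ds, prime_card hcDt hy₀Dt]; exact hcard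
        have hDD : Ds' \ Dt' = (Ds \ Dt).erase x₀ := by
          ext v
          constructor
          · intro hv
            obtain ⟨hvin, hvn⟩ := Finset.mem_sdiff.mp hv
            rcases Finset.mem_insert.mp hvin with h | h
            · exact absurd (by rw [h]; exact hcDt' : v ∈ Dt') hvn
            · obtain ⟨hvx, hvDs⟩ := Finset.mem_erase.mp h
              refine Finset.mem_erase.mpr ⟨hvx, Finset.mem_sdiff.mpr ⟨hvDs, fun hvDt => hvn ?_⟩⟩
              have hvy : v ≠ y₀ := fun hh => hy₀Ds (by rw [← hh]; exact hvDs)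
              exact Finset.mem_insert.mpr (Or.inr (Finset.mem_erase.mpr ⟨hvy, hvDt⟩))
          · intro hv
            obtain ⟨hvx, hv2⟩ := Finset.mem_erase.mp hv
            obtain ⟨hvDs, hvDt⟩ := Finset.mem_sdiff.mp hv2
            refine Finset.mem_sdiff.mpr
              ⟨Finset.mem_insert.mpr (Or.inr (Finset.mem_erase.mpr ⟨hvx, hvDs⟩)),
                fun hvin => ?_⟩
            rcases Finset.mem_insert.mp hvin with h | h
            · exact hcDs (by rw [← h]; exact hvDs)
            · exact hvDt (Finset.mem_of_mem_erase h)
        have hDDcard : (Ds' \ Dt').card = d - 1 := by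
          rw [hDD, Finset.card_erase_of_mem hx₀]
        obtain ⟨seq, hseq, h0, hl⟩ :=
          helper_seq hc (d - 1) Ds' Dt' hDDcard hcards hcDs' hcDt'
        obtain ⟨seq', hseq', h0', hl'⟩ := append_seq seq Dt hseq hDt (by
          rw [hl, hDt']; exact move_out hcDt hy₀Dt)
        obtain ⟨seq'', hseq'', h0'', hl''⟩ := prepend_seq Ds seq' hseq' hDs (by
          rw [h0', h0, hDs']; exact move_in hcDs hx₀Ds)
        refine ⟨d - 1 + 1 + 1, seq'', hseq'', h0'', by rw [hl'', hl'], by omega⟩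
end

section
/- For every integer k ≥ 2 there exist a finite connected split graph G and two disjoint distance-2 dominating sets D_s, D_t of G, each of size k, such that there exists a TJ-sequence in G from D_s to D_t of length exactly |D_s Δ D_t|/2 + 1 (= k + 1), and every TJ-sequence in G from D_s to D_t has length at least |D_s Δ D_t|/2 + 1. -/
inductive Vtx (k : ℕ) : Type
  | A : Fin k → Vtx k
  | B : Fin k → Vtx k
  | P : Fin k → Fin k → Vtx k
  | X : Fin k → Vtx k
  | Y : Fin k → Vtx k
  | Z : Vtx k
  | C : Vtx k
  deriving DecidableEq, Fintype

open Vtx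

variable {k : ℕ}

def isK : Vtx k → Bool
  | X _ => true
  | Y _ => true
  | Z => true
  | C => true
  | _ => false

def sE : Vtx k → Vtx k → Bool
  | A i, X i' => i = i'
  | A _, Z => true
  | B j, Y j' => j = j'
  | B _, Z => true
  | P i _, X i' => i = i'
  | P _ j, Y j' => j = j'
  | _, _ => false

def Gr (k : ℕ) : SimpleGraph (Vtx k) where
  Adj u v := u ≠ v ∧ ((isK u ∧ isK v) ∨ sE u v ∨ sE v u)
  symm := ⟨by rintro u v ⟨h1, h2⟩; exact ⟨h1.symm, by tauto⟩⟩
  loopless := ⟨fun v h => h.1 rfl⟩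

lemma gr_adj {u v : Vtx k} : (Gr k).Adj u v ↔ u ≠ v ∧ ((isK u ∧ isK v) ∨ sE u v ∨ sE v u) := Iff.rfl

-- adjacency facts
lemma adj_AZ (m : Fin k) : (Gr k).Adj (A m) Z := ⟨by simp, by simp [sE]⟩
lemma adj_BZ (m : Fin k) : (Gr k).Adj (B m) Z := ⟨by simp, by simp [sE]⟩
lemma adj_AX (m : Fin k) : (Gr k).Adj (A m) (X m) := ⟨by simp, by simp [sE]⟩
lemma adj_BY (m : Fin k) : (Gr k).Adj (B m) (Y m) := ⟨by simp, by simp [sE]⟩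
lemma adj_PX (i j : Fin k) : (Gr k).Adj (P i j) (X i) := ⟨by simp, by simp [sE]⟩
lemma adj_PY (i j : Fin k) : (Gr k).Adj (P i j) (Y j) := ⟨by simp, by simp [sE]⟩
lemma adj_K {u v : Vtx k} (hu : isK u) (hv : isK v) (hne : u ≠ v) : (Gr k).Adj u v := ⟨hne, Or.inl ⟨hu, hv⟩⟩

lemma reach2 {u v : Vtx k} (w : Vtx k) (h1 : (Gr k).Adj u w) (h2 : (Gr k).Adj w v) :
    (Gr k).Reachable u v ∧ (Gr k).dist u v ≤ 2 := by
  let p : (Gr k).Walk u v := SimpleGraph.Walk.cons h1 (SimpleGraph.Walk.cons h2 SimpleGraph.Walk.nil)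
  exact ⟨p.reachable, by have := SimpleGraph.dist_le p; simpa [p] using this⟩

lemma reach1 {u v : Vtx k} (h : (Gr k).Adj u v) :
    (Gr k).Reachable u v ∧ (Gr k).dist u v ≤ 2 := by
  let p : (Gr k).Walk u v := SimpleGraph.Walk.cons h SimpleGraph.Walk.nil
  exact ⟨p.reachable, le_trans (by simpa [p] using SimpleGraph.dist_le p) (by norm_num)⟩

lemma reach0 (u : Vtx k) : (Gr k).Reachable u u ∧ (Gr k).dist u u ≤ 2 := by
  exact ⟨SimpleGraph.Reachable.refl u, by simp [SimpleGraph.dist_self]⟩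

-- C dominates everything
lemma C_dom (v : Vtx k) : (Gr k).Reachable C v ∧ (Gr k).dist C v ≤ 2 := by
  cases v with
  | A m => exact reach2 Z (adj_K (by simp [isK]) (by simp [isK]) (by simp)) (adj_AZ m).symm
  | B m => exact reach2 Z (adj_K (by simp [isK]) (by simp [isK]) (by simp)) (adj_BZ m).symm
  | P i j => exact reach2 (X i) (adj_K (by simp [isK]) (by simp [isK]) (by simp)) (adj_PX i j).symm
  | X m => exact reach1 (adj_K (by simp [isK]) (by simp [isK]) (by simp))
  | Y m => exact reach1 (adj_K (by simp [isK]) (by simp [isK]) (by simp))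
  | Z => exact reach1 (adj_K (by simp [isK]) (by simp [isK]) (by simp))
  | C => exact reach0 C

lemma no2 {u v : Vtx k} (hne : u ≠ v) (hadj : ¬ (Gr k).Adj u v)
    (hcn : ∀ w, ¬((Gr k).Adj u w ∧ (Gr k).Adj w v)) :
    ¬((Gr k).Reachable u v ∧ (Gr k).dist u v ≤ 2) := by
  rintro ⟨hr, hd⟩
  obtain ⟨p, hp⟩ := hr.exists_walk_length_eq_dist
  have hd' : p.length ≤ 2 := by omega
  cases p with
  | nil => exact hne rfl
  | cons h q =>
    cases q with
    | nil => exact hadj h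
    | cons h' q' =>
      cases q' with
      | nil => exact hcn _ ⟨h, h'⟩
      | cons h'' q'' => simp [SimpleGraph.Walk.length_cons] at hd'

lemma nadj_A_P {m i j : Fin k} (hmi : m ≠ i) :
    ∀ w, ¬((Gr k).Adj (A m) w ∧ (Gr k).Adj w (P i j)) := by
  intro w
  cases w <;> simp_all [gr_adj, isK, sE, Ne.symm] <;> omega

lemma nadj_A_P' {m i j : Fin k} (hmi : m ≠ i) : ¬ (Gr k).Adj (A m) (P i j) := by
  simp [gr_adj, isK, sE]

lemma nadj_B_P {m i j : Fin k} (hmj : m ≠ j) :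
    ∀ w, ¬((Gr k).Adj (B m) w ∧ (Gr k).Adj w (P i j)) := by
  intro w
  cases w <;> simp_all [gr_adj, isK, sE, Ne.symm] <;> omega

lemma nadj_B_P' {m i j : Fin k} (hmj : m ≠ j) : ¬ (Gr k).Adj (B m) (P i j) := by
  simp [gr_adj, isK, sE]

def DsF (k : ℕ) : Finset (Vtx k) := Finset.univ.image A
def DtF (k : ℕ) : Finset (Vtx k) := Finset.univ.image B

lemma Ds_dom (hk : 0 < k) : IsDrDS (Gr k) 2 ↑(DsF k) := by
  intro v
  cases v with
  | A m => exact ⟨A m, by simp [DsF], reach0 _⟩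
  | B m => exact ⟨A ⟨0,hk⟩, by simp [DsF], reach2 Z (adj_AZ _) (adj_BZ m).symm⟩
  | P i j => exact ⟨A i, by simp [DsF], reach2 (X i) (adj_AX i) (adj_PX i j).symm⟩
  | X m => exact ⟨A m, by simp [DsF], reach1 (adj_AX m)⟩
  | Y m => exact ⟨A ⟨0,hk⟩, by simp [DsF],
      reach2 Z (adj_AZ _) (adj_K (by simp [isK]) (by simp [isK]) (by simp))⟩
  | Z => exact ⟨A ⟨0,hk⟩, by simp [DsF], reach1 (adj_AZ _)⟩
  | C => exact ⟨A ⟨0,hk⟩, by simp [DsF],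
      reach2 Z (adj_AZ _) (adj_K (by simp [isK]) (by simp [isK]) (by simp))⟩

lemma Dt_dom (hk : 0 < k) : IsDrDS (Gr k) 2 ↑(DtF k) := by
  intro v
  cases v with
  | B m => exact ⟨B m, by simp [DtF], reach0 _⟩
  | A m => exact ⟨B ⟨0,hk⟩, by simp [DtF], reach2 Z (adj_BZ _) (adj_AZ m).symm⟩
  | P i j => exact ⟨B j, by simp [DtF], reach2 (Y j) (adj_BY j) (adj_PY i j).symm⟩
  | Y m => exact ⟨B m, by simp [DtF], reach1 (adj_BY m)⟩
  | X m => exact ⟨B ⟨0,hk⟩, by simp [DtF],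
      reach2 Z (adj_BZ _) (adj_K (by simp [isK]) (by simp [isK]) (by simp))⟩
  | Z => exact ⟨B ⟨0,hk⟩, by simp [DtF], reach1 (adj_BZ _)⟩
  | C => exact ⟨B ⟨0,hk⟩, by simp [DtF],
      reach2 Z (adj_BZ _) (adj_K (by simp [isK]) (by simp [isK]) (by simp))⟩

lemma C_dom_set {D : Finset (Vtx k)} (h : C ∈ D) : IsDrDS (Gr k) 2 ↑D :=
  fun v => ⟨C, by simpa using h, C_dom v⟩

lemma reach_Z (v : Vtx k) : (Gr k).Reachable v Z := by
  cases v with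
  | A m => exact (reach1 (adj_AZ m)).1
  | B m => exact (reach1 (adj_BZ m)).1
  | P i j => exact (reach2 (X i) (adj_PX i j) (adj_K (by simp [isK]) (by simp [isK]) (by simp))).1
  | X m => exact (reach1 (adj_K (by simp [isK]) (by simp [isK]) (by simp))).1
  | Y m => exact (reach1 (adj_K (by simp [isK]) (by simp [isK]) (by simp))).1
  | Z => exact SimpleGraph.Reachable.refl _
  | C => exact (reach1 (adj_K (by simp [isK]) (by simp [isK]) (by simp))).1

lemma Gr_conn : (Gr k).Connected := by
  have : Nonempty (Vtx k) := ⟨Z⟩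
  exact SimpleGraph.Connected.mk (fun u v => (reach_Z u).trans (reach_Z v).symm)

lemma sE_to_K {u v : Vtx k} (h : sE u v = true) : isK v = true := by
  cases u <;> cases v <;> simp_all [isK, sE]

lemma indep_S : ∀ a : Vtx k, isK a = false → ∀ b : Vtx k, isK b = false → ¬ (Gr k).Adj a b := by
  intro a ha b hb hadj
  rcases hadj.2 with ⟨h1,_⟩ | h | h
  · simp_all
  · simp [sE_to_K h] at hb
  · simp [sE_to_K h] at ha

lemma disj_DsDt : Disjoint (DsF k) (DtF k) := by
  rw [Finset.disjoint_left]
  intro a ha hb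
  simp [DsF, DtF] at ha hb
  obtain ⟨m, rfl⟩ := ha
  obtain ⟨n, hn⟩ := hb
  cases hn

lemma card_DsF : (DsF k).card = k := by
  rw [DsF, Finset.card_image_of_injective _ (fun a b h => by injection h)]
  simp

lemma card_DtF : (DtF k).card = k := by
  rw [DtF, Finset.card_image_of_injective _ (fun a b h => by injection h)]
  simp

lemma hsd_eq : halfSymmDiff (DsF k) (DtF k) = k := by
  have hd := disj_DsDt (k := k)
  have h1 : (((↑(DsF k) : Set (Vtx k)) \ ↑(DtF k)) ∪ ((↑(DtF k) : Set (Vtx k)) \ ↑(DsF k)))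
      = ↑(DsF k ∪ DtF k) := by
    ext v
    simp only [Set.mem_union, Set.mem_diff, Finset.coe_union, Finset.mem_coe, Finset.mem_union]
    constructor
    · tauto
    · rintro (h | h)
      · exact Or.inl ⟨h, Finset.disjoint_left.mp hd h⟩
      · exact Or.inr ⟨h, Finset.disjoint_right.mp hd h⟩
  rw [halfSymmDiff, h1, Set.ncard_coe_finset, Finset.card_union_of_disjoint hd,
    card_DsF, card_DtF]
  omega

def Useq (k : ℕ) : Fin (k+2) → Finset (Vtx k) := fun n =>
  ((Finset.univ.filter (fun m : Fin k => (n:ℕ) ≤ (m:ℕ))).image A) ∪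
  ((Finset.univ.filter (fun m : Fin k => (m:ℕ)+1 < (n:ℕ))).image B) ∪
  (if 1 ≤ (n:ℕ) ∧ (n:ℕ) ≤ k then {C} else ∅)

lemma memU_A {n : Fin (k+2)} {m : Fin k} : A m ∈ Useq k n ↔ (n:ℕ) ≤ (m:ℕ) := by
  simp [Useq]
  split <;> simp

lemma memU_B {n : Fin (k+2)} {m : Fin k} : B m ∈ Useq k n ↔ (m:ℕ)+1 < (n:ℕ) := by
  simp [Useq]
  split <;> simp

lemma memU_C {n : Fin (k+2)} : C ∈ Useq k n ↔ (1 ≤ (n:ℕ) ∧ (n:ℕ) ≤ k) := by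
  simp [Useq]
  split <;> simp_all

lemma memU_P {n : Fin (k+2)} {i j : Fin k} : P i j ∉ Useq k n := by
  simp [Useq]; split <;> simp

lemma memU_X {n : Fin (k+2)} {m : Fin k} : X m ∉ Useq k n := by
  simp [Useq]; split <;> simp

lemma memU_Y {n : Fin (k+2)} {m : Fin k} : Y m ∉ Useq k n := by
  simp [Useq]; split <;> simp

lemma memU_Z {n : Fin (k+2)} : Z ∉ Useq k n := by
  simp [Useq]; split <;> simp

lemma Useq_zero : Useq k 0 = DsF k := by
  ext v
  cases v <;> simp [memU_A, memU_B, memU_C, memU_P, memU_X, memU_Y, memU_Z, DsF]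

lemma Useq_last : Useq k (Fin.last (k+1)) = DtF k := by
  ext v
  cases v <;>
    simp [memU_A, memU_B, memU_C, memU_P, memU_X, memU_Y, memU_Z, DtF, Fin.last] <;>
    omega

lemma Useq_dom (hk : 0 < k) (n : Fin (k+2)) : IsDrDS (Gr k) 2 ↑(Useq k n) := by
  rcases Nat.eq_zero_or_pos n.val with h0 | h1
  · have : n = 0 := by ext; simpa using h0
    rw [this, Useq_zero]; exact Ds_dom hk
  · rcases Nat.lt_or_ge (n:ℕ) (k+1) with h2 | h2
    · exact C_dom_set (memU_C.mpr ⟨h1, by omega⟩)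
    · have : n = Fin.last (k+1) := by ext; simp [Fin.last]; omega
      rw [this, Useq_last]; exact Dt_dom hk

lemma Useq_step (hk : 2 ≤ k) (i : Fin (k+1)) :
    ∃ x ∈ Useq k i.castSucc, ∃ y, y ∉ Useq k i.castSucc ∧
      (↑(Useq k i.succ) : Set (Vtx k)) = (↑(Useq k i.castSucc) \ {x}) ∪ {y} := by
  have hiv : (i : ℕ) ≤ k := by omega
  rcases Nat.eq_zero_or_pos i.val with h0 | h1
  · -- x = A 0, y = C
    refine ⟨A ⟨0, by omega⟩, by simp [memU_A, h0], C, by simp [memU_C, h0], ?_⟩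
    ext v
    cases v <;>
      simp [memU_A, memU_B, memU_C, memU_P, memU_X, memU_Y, memU_Z, h0, Fin.ext_iff] <;>
      omega
  · rcases Nat.lt_or_ge i.val k with h2 | h2
    · -- x = A i, y = B (i-1)
      refine ⟨A ⟨i.val, h2⟩, by simp [memU_A], B ⟨i.val - 1, by omega⟩,
        by simp [memU_B]; omega, ?_⟩
      ext v
      cases v <;>
        simp [memU_A, memU_B, memU_C, memU_P, memU_X, memU_Y, memU_Z, Fin.ext_iff] <;>
        omega
    · -- i.val = k : x = C, y = B (k-1)
      have h3 : i.val = k := by omega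
      refine ⟨C, by simp [memU_C]; omega, B ⟨k - 1, by omega⟩,
        by simp [memU_B]; omega, ?_⟩
      ext v
      cases v <;>
        simp [memU_A, memU_B, memU_C, memU_P, memU_X, memU_Y, memU_Z, h3, Fin.ext_iff] <;>
        omega

lemma card_sdiff_step {W : Type*} [DecidableEq W] {T D D' : Finset W} {x y : W}
    (hE : (↑D' : Set W) = (↑D \ {x}) ∪ {y}) : (T \ D).card ≤ (T \ D').card + 1 := by
  have hsub : T \ D ⊆ (T \ D') ∪ {y} := by
    intro t ht
    rw [Finset.mem_sdiff] at ht
    rw [Finset.mem_union, Finset.mem_singleton]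
    by_cases hty : t = y
    · exact Or.inr hty
    · refine Or.inl (Finset.mem_sdiff.mpr ⟨ht.1, fun hD' => ?_⟩)
      have h2 : (t : W) ∈ (↑D' : Set W) := hD'
      rw [hE] at h2
      rcases h2 with ⟨h3, _⟩ | h3
      · exact ht.2 h3
      · exact hty h3
  calc (T \ D).card ≤ ((T \ D') ∪ {y}).card := Finset.card_le_card hsub
    _ ≤ (T \ D').card + 1 := by
        refine le_trans (Finset.card_union_le _ _) ?_
        simp

set_option maxHeartbeats 1000000 in
lemma lower_bound_s9 (hk : 2 ≤ k) (q : ℕ) (Dseq : Fin (q+1) → Finset (Vtx k))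
    (h : IsTJSeq (Gr k) 2 q Dseq) (h0 : Dseq 0 = DsF k) (hl : Dseq (Fin.last q) = DtF k) :
    k + 1 ≤ q := by
  by_contra hq
  push_neg at hq
  have hstep : ∀ i : Fin q,
      (DtF k \ Dseq i.castSucc).card ≤ (DtF k \ Dseq i.succ).card + 1 := by
    intro i
    obtain ⟨x, hx, y, hy, hEq⟩ := h.2 i
    exact card_sdiff_step hEq
  have hdown : ∀ n, n ≤ q → (DtF k \ Dseq ⟨q - n, by omega⟩).card ≤ n := by
    intro n
    induction n with
    | zero =>
      intro _
      have e : (⟨q - 0, by omega⟩ : Fin (q+1)) = Fin.last q := by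
        ext; simp [Fin.last]
      rw [e, hl]
      simp
    | succ n ih =>
      intro hn
      have hlt : q - (n+1) < q := by omega
      have e1 : (⟨q - (n+1), hlt⟩ : Fin q).castSucc = ⟨q - (n+1), by omega⟩ := by
        ext; simp
      have e2 : (⟨q - (n+1), hlt⟩ : Fin q).succ = ⟨q - n, by omega⟩ := by
        ext; simp; omega
      have := hstep ⟨q - (n+1), hlt⟩
      rw [e1, e2] at this
      have ihn := ih (by omega)
      omega
  have hcard0 : (DtF k \ Dseq 0).card = k := by
    rw [h0, Finset.sdiff_eq_self_of_disjoint disj_DsDt.symm, card_DtF]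
  have hkq : k ≤ q := by
    have := hdown q le_rfl
    have e : (⟨q - q, by omega⟩ : Fin (q+1)) = 0 := by ext; simp
    rw [e, hcard0] at this
    exact this
  have hqk : q = k := by omega
  have hq0 : 0 < q := by omega
  have i1h : 1 < q + 1 := by omega
  have hm1 : (DtF k \ Dseq ⟨1, i1h⟩).card ≤ k - 1 := by
    have := hdown (k-1) (by omega)
    have e : (⟨q - (k-1), by omega⟩ : Fin (q+1)) = ⟨1, i1h⟩ := by
      ext; simp; omega
    rwa [e] at this
  obtain ⟨x, hx, y, hy, hEq⟩ := h.2 ⟨0, hq0⟩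
  have ec : (⟨0, hq0⟩ : Fin q).castSucc = (0 : Fin (q+1)) := by ext; simp
  have es : (⟨0, hq0⟩ : Fin q).succ = (⟨1, i1h⟩ : Fin (q+1)) := by ext; simp
  rw [ec] at hx hy hEq
  rw [es] at hEq
  rw [h0] at hx hy
  simp only [h0] at hEq
  -- y ∈ DtF k
  have hyDt : y ∈ DtF k := by
    by_contra hyn
    have hsub : DtF k ⊆ DtF k \ Dseq ⟨1, i1h⟩ := by
      intro t ht
      rw [Finset.mem_sdiff]
      refine ⟨ht, fun htD1 => ?_⟩
      have h2 : (t : Vtx k) ∈ (↑(Dseq ⟨1, i1h⟩) : Set (Vtx k)) := htD1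
      rw [hEq] at h2
      rcases h2 with h3 | h3
      · exact Finset.disjoint_left.mp disj_DsDt (by simpa using h3.1) ht
      · rw [Set.mem_singleton_iff] at h3
        subst h3
        exact hyn ht
    have h8 := Finset.card_le_card hsub
    have h9 : (DtF k).card = k := card_DtF
    omega
  obtain ⟨iA, rfl⟩ : ∃ m, x = A m := by
    simp only [DsF, Finset.mem_image, Finset.mem_univ, true_and] at hx
    obtain ⟨m, rfl⟩ := hx
    exact ⟨m, rfl⟩
  obtain ⟨jB, rfl⟩ : ∃ m, y = B m := by
    simp only [DtF, Finset.mem_image, Finset.mem_univ, true_and] at hyDt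
    obtain ⟨m, rfl⟩ := hyDt
    exact ⟨m, rfl⟩
  -- pick j' ≠ jB
  have hj' : ∃ j' : Fin k, j' ≠ jB := by
    by_cases h5 : jB.val = 0
    · exact ⟨⟨1, by omega⟩, by simp [Fin.ext_iff]; omega⟩
    · exact ⟨⟨0, by omega⟩, by simp [Fin.ext_iff]; omega⟩
  obtain ⟨j', hjj⟩ := hj'
  obtain ⟨u, hu, hreach⟩ := h.1 ⟨1, i1h⟩ (P iA j')
  rw [hEq] at hu
  rcases hu with ⟨huD0, hux⟩ | rfl
  · simp only [DsF, Finset.coe_image, Finset.coe_univ, Set.image_univ, Set.mem_range] at huD0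
    obtain ⟨m, rfl⟩ := huD0
    have hmi : m ≠ iA := by
      intro hmeq
      exact hux (by simp [hmeq])
    exact no2 (by simp) (nadj_A_P' hmi) (nadj_A_P hmi) hreach
  · exact no2 (by simp) (nadj_B_P' hjj.symm) (nadj_B_P hjj.symm) hreach

theorem stmt9 (k : ℕ) (hk : 2 ≤ k) :
    ∃ (V : Type) (_ : Fintype V) (G : SimpleGraph V) (K S : Set V),
      K ∪ S = Set.univ ∧ Disjoint K S ∧ G.IsClique K ∧
      (∀ a ∈ S, ∀ b ∈ S, ¬ G.Adj a b) ∧ G.Connected ∧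
      ∃ Ds Dt : Finset V,
        IsDrDS G 2 ↑Ds ∧ IsDrDS G 2 ↑Dt ∧ Ds.card = k ∧ Dt.card = k ∧
        Disjoint Ds Dt ∧ halfSymmDiff Ds Dt = k ∧
        (∃ (q : ℕ) (Dseq : Fin (q + 1) → Finset V), IsTJSeq G 2 q Dseq ∧
            Dseq 0 = Ds ∧ Dseq (Fin.last q) = Dt ∧ q = halfSymmDiff Ds Dt + 1) ∧
        (∀ (q : ℕ) (Dseq : Fin (q + 1) → Finset V), IsTJSeq G 2 q Dseq →
            Dseq 0 = Ds → Dseq (Fin.last q) = Dt → halfSymmDiff Ds Dt + 1 ≤ q) := by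
  classical
  have hk0 : 0 < k := by omega
  refine ⟨Vtx k, inferInstance, Gr k, {v | isK v = true}, {v | isK v = false},
    ?_, ?_, ?_, ?_, Gr_conn, DsF k, DtF k, Ds_dom hk0, Dt_dom hk0,
    card_DsF, card_DtF, disj_DsDt, hsd_eq, ?_, ?_⟩
  · ext v; cases h : isK v <;> simp [h]
  · rw [Set.disjoint_left]; intro v hv hv'; simp at hv hv'; simp [hv] at hv'
  · intro u hu v hv hne; exact adj_K hu hv hne
  · intro a ha b hb; exact indep_S a ha b hb
  · refine ⟨k + 1, Useq k, ⟨fun i => Useq_dom hk0 i, Useq_step hk⟩,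
      Useq_zero, Useq_last, ?_⟩
    rw [hsd_eq]
  · intro q Dseq hTJ h0 hl
    rw [hsd_eq]
    exact lower_bound_s9 hk q Dseq hTJ h0 hl
end

section
/- Let G be a finite graph, let r ≥ 1 be an integer, and let D_s, D_t be distance-r dominating sets of G with |D_s| = |D_t|. Then every TS-sequence in G from D_s to D_t has length at least M*_TS(G,D_s,D_t), the minimum over all bijections f : D_s → D_t of Σ_{s ∈ D_s} dist_G(s, f(s)). -/
lemma my_dist_triangle {V : Type*} {G : SimpleGraph V} {u v w : V}
    (h1 : G.Reachable u v) (h2 : G.Reachable v w) :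
    G.dist u w ≤ G.dist u v + G.dist v w := by
  obtain ⟨p, hp⟩ := h1.exists_walk_length_eq_dist
  obtain ⟨q, hq⟩ := h2.exists_walk_length_eq_dist
  calc G.dist u w ≤ (p.append q).length := G.dist_le _
    _ = G.dist u v + G.dist v w := by rw [SimpleGraph.Walk.length_append, hp, hq]

lemma step_equiv {V : Type*} [Fintype V] [DecidableEq V] {G : SimpleGraph V}
    {A B : Finset V} {x y : V}
    (hx : x ∈ A) (hy : y ∉ A) (hadj : G.Adj x y)
    (hB : (↑B : Set V) = (↑A \ {x}) ∪ {y}) :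
    ∃ f : ↥A ≃ ↥B, (∀ s : ↥A, G.Reachable ↑s ↑(f s)) ∧
      ∑ s : ↥A, G.dist (s : V) ((f s : V)) ≤ 1 := by
  have hne : x ≠ y := hadj.ne
  have hBm : ∀ b, b ∈ B ↔ (b ∈ A ∧ b ≠ x) ∨ b = y := by
    intro b
    have h := Set.ext_iff.mp hB b
    simp only [Finset.coe_sort_coe, Finset.mem_coe, Set.mem_union, Set.mem_diff,
      Set.mem_singleton_iff] at h
    tauto
  have hmem : ∀ a : V, a ∈ A ↔ Equiv.swap x y a ∈ B := by
    intro a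
    rcases eq_or_ne a x with rfl | hax
    · simp [Equiv.swap_apply_left, hBm, hx, hne.symm]
    · rcases eq_or_ne a y with rfl | hay
      · rw [Equiv.swap_apply_right, hBm]
        simp [hy, hne, hne.symm]
      · rw [Equiv.swap_apply_of_ne_of_ne hax hay, hBm]
        constructor
        · intro h; exact Or.inl ⟨h, hax⟩
        · rintro (⟨h, -⟩ | rfl); exact h; exact absurd rfl hay
  refine ⟨(Equiv.swap x y).subtypeEquiv hmem, ?_, ?_⟩
  · rintro ⟨a, ha⟩
    rcases eq_or_ne a x with rfl | hax
    · simpa [Equiv.subtypeEquiv, Equiv.swap_apply_left] using hadj.reachable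
    · have hay : a ≠ y := fun h => hy (h ▸ ha)
      simp only [Equiv.subtypeEquiv, Equiv.coe_fn_mk,
        Equiv.swap_apply_of_ne_of_ne hax hay]
      exact SimpleGraph.Reachable.refl a
  · have key : ∀ s : ↥A, G.dist (s : V) (((Equiv.swap x y).subtypeEquiv hmem s : V)) =
        if s = (⟨x, hx⟩ : ↥A) then G.dist x y else 0 := by
      rintro ⟨a, ha⟩
      rcases eq_or_ne a x with rfl | hax
      · simp [Equiv.subtypeEquiv, Equiv.swap_apply_left]
      · have hay : a ≠ y := fun h => hy (h ▸ ha)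
        simp [Equiv.subtypeEquiv, Equiv.swap_apply_of_ne_of_ne hax hay,
          Subtype.ext_iff, hax]
    rw [Finset.sum_congr rfl (fun s _ => key s), Fintype.sum_ite_eq']
    exact le_of_eq ((SimpleGraph.dist_eq_one_iff_adj).mpr hadj)

lemma ts_main {V : Type*} [Fintype V] [DecidableEq V] (G : SimpleGraph V) (r : ℕ) :
    ∀ (q : ℕ) (Dseq : Fin (q + 1) → Finset V), IsTSSeq G r q Dseq →
      ∃ f : ↥(Dseq 0) ≃ ↥(Dseq (Fin.last q)),
        (∀ s : ↥(Dseq 0), G.Reachable (s : V) ((f s : V))) ∧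
        ∑ s : ↥(Dseq 0), G.dist (s : V) ((f s : V)) ≤ q := by
  intro q
  induction q with
  | zero =>
      intro Dseq _
      have h0 : (Fin.last 0) = (0 : Fin 1) := rfl
      rw [h0]
      exact ⟨Equiv.refl _, fun s => SimpleGraph.Reachable.refl _, by
        simp [SimpleGraph.dist_self]⟩
  | succ q ih =>
      intro Dseq hseq
      set Dseq' : Fin (q + 1) → Finset V := fun i => Dseq i.succ with hD'
      have hseq' : IsTSSeq G r q Dseq' := by
        constructor
        · intro i; exact hseq.1 i.succ
        · intro i
          obtain ⟨x, hx, y, hy, hadj, hB⟩ := hseq.2 i.succ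
          refine ⟨x, ?_, y, ?_, hadj, ?_⟩
          · show x ∈ Dseq i.castSucc.succ
            simpa only [Fin.succ_castSucc] using hx
          · show y ∉ Dseq i.castSucc.succ
            simpa only [Fin.succ_castSucc] using hy
          · show (↑(Dseq i.succ.succ) : Set V) = (↑(Dseq i.castSucc.succ) \ {x}) ∪ {y}
            simpa only [Fin.succ_castSucc] using hB
      obtain ⟨g, hgreach, hgsum⟩ := ih Dseq' hseq'
      obtain ⟨x, hx, y, hy, hadj, hB⟩ := hseq.2 (0 : Fin (q + 1))
      obtain ⟨f, hfreach, hfsum⟩ := step_equiv (G := G) hx hy hadj hB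
      have e1 : ((0 : Fin (q + 1)).castSucc) = (0 : Fin (q + 2)) := Fin.castSucc_zero
      have e2 : ((Fin.last q).succ) = Fin.last (q + 1) := Fin.succ_last q
      rw [← e1, ← e2]
      refine ⟨f.trans g, ?_, ?_⟩
      · intro s
        exact (hfreach s).trans (hgreach (f s))
      · calc ∑ s : ↥(Dseq (0 : Fin (q+1)).castSucc), G.dist (s : V) ((g (f s) : V))
            ≤ ∑ s : ↥(Dseq (0 : Fin (q+1)).castSucc),
              (G.dist (s : V) ((f s : V)) + G.dist ((f s : V)) ((g (f s) : V))) := by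
              refine Finset.sum_le_sum fun s _ => ?_
              exact my_dist_triangle (hfreach s) (hgreach (f s))
          _ = (∑ s : ↥(Dseq (0 : Fin (q+1)).castSucc), G.dist (s : V) ((f s : V)))
              + ∑ s : ↥(Dseq (0 : Fin (q+1)).castSucc), G.dist ((f s : V)) ((g (f s) : V)) :=
              Finset.sum_add_distrib
          _ = (∑ s : ↥(Dseq (0 : Fin (q+1)).castSucc), G.dist (s : V) ((f s : V)))
              + ∑ t : ↥(Dseq' 0), G.dist (t : V) ((g t : V)) := by
              rw [Equiv.sum_comp f (fun t : ↥(Dseq' 0) => G.dist (t : V) ((g t : V)))]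
          _ ≤ 1 + q := add_le_add hfsum hgsum
          _ = q + 1 := by omega

theorem stmt10 {V : Type*} [Fintype V] (G : SimpleGraph V) (r : ℕ) (hr : 1 ≤ r)
    (Ds Dt : Finset V) (hDs : IsDrDS G r ↑Ds) (hDt : IsDrDS G r ↑Dt)
    (hcard : Ds.card = Dt.card) :
    ∀ (q : ℕ) (Dseq : Fin (q + 1) → Finset V), IsTSSeq G r q Dseq →
      Dseq 0 = Ds → Dseq (Fin.last q) = Dt → MstarTS G Ds Dt ≤ q := by
  classical
  intro q Dseq hseq h0 hlast
  obtain ⟨f, -, hsum⟩ := ts_main G r q Dseq hseq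
  subst h0 hlast
  refine le_trans (Nat.sInf_le ⟨f, rfl⟩) hsum
end

section
/- Let r ≥ 1 be an integer and let G be a finite graph each of whose connected components has diameter at most r. Then for any two distance-r dominating sets D_s, D_t of G with |D_s| = |D_t|, there exists a TJ-sequence in G from D_s to D_t. -/
section

variable {V : Type*}

def TJReachable (G : SimpleGraph V) (r : ℕ) (Ds Dt : Finset V) : Prop :=
  ∃ (q : ℕ) (Dseq : Fin (q + 1) → Finset V),
    IsTJSeq G r q Dseq ∧ Dseq 0 = Ds ∧ Dseq (Fin.last q) = Dt

variable {G : SimpleGraph V} {r : ℕ}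

theorem isDrDS_iff_forall_exists_reachable
    (hdiam : ∀ u v : V, G.Reachable u v → G.dist u v ≤ r) (D : Set V) :
    IsDrDS G r D ↔ ∀ v, ∃ u ∈ D, G.Reachable u v :=
  ⟨fun h v ↦ (h v).imp fun _ ⟨hu, huv, _⟩ ↦ ⟨hu, huv⟩,
    fun h v ↦ (h v).imp fun u ⟨hu, huv⟩ ↦ ⟨hu, huv, hdiam u v huv⟩⟩

theorem IsDrDS.insert_erase [DecidableEq V]
    (hdiam : ∀ u v : V, G.Reachable u v → G.dist u v ≤ r) {D : Finset V} (hD : IsDrDS G r ↑D)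
    {x y z : V} (hz : z ∈ insert y (D.erase x)) (hzx : G.Reachable z x) :
    IsDrDS G r ↑(insert y (D.erase x)) := by
  rw [isDrDS_iff_forall_exists_reachable hdiam] at hD ⊢
  intro v
  obtain ⟨u, hu, huv⟩ := hD v
  by_cases hux : u = x
  · exact ⟨z, hz, hzx.trans (hux ▸ huv)⟩
  · exact ⟨u, Finset.mem_insert_of_mem (Finset.mem_erase.mpr ⟨hux, hu⟩), huv⟩

theorem IsTJSeq.const {D : Finset V} (hD : IsDrDS G r ↑D) : IsTJSeq G r 0 fun _ ↦ D :=
  ⟨fun _ ↦ hD, fun i ↦ i.elim0⟩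

theorem IsTJSeq.cons [DecidableEq V] {q : ℕ} {Dseq : Fin (q + 1) → Finset V}
    (hseq : IsTJSeq G r q Dseq) {D : Finset V} (hD : IsDrDS G r ↑D) {x y : V} (hx : x ∈ D)
    (hy : y ∉ D) (h0 : Dseq 0 = insert y (D.erase x)) :
    IsTJSeq G r (q + 1) (Fin.cons D Dseq) := by
  obtain ⟨hdom, hstep⟩ := hseq
  refine ⟨Fin.cases (by simpa using hD) (by simpa using hdom), Fin.cases ?_ fun j ↦ ?_⟩
  · refine ⟨x, by simpa using hx, y, by simpa using hy, ?_⟩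
    simp only [Fin.castSucc_zero, Fin.cons_zero, Fin.succ_zero_eq_one, Fin.cons_one, h0]
    push_cast
    rw [Set.union_singleton]
  · simpa only [← Fin.succ_castSucc, Fin.cons_succ] using hstep j

theorem TJReachable.refl {D : Finset V} (hD : IsDrDS G r ↑D) : TJReachable G r D D :=
  ⟨0, fun _ ↦ D, IsTJSeq.const hD, rfl, rfl⟩

theorem TJReachable.head [DecidableEq V] {D Dt : Finset V} {x y : V} (hD : IsDrDS G r ↑D)
    (hx : x ∈ D) (hy : y ∉ D) (h : TJReachable G r (insert y (D.erase x)) Dt) :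
    TJReachable G r D Dt := by
  obtain ⟨q, Dseq, hseq, h0, hlast⟩ := h
  refine ⟨q + 1, Fin.cons D Dseq, hseq.cons hD hx hy h0, rfl, ?_⟩
  rwa [← Fin.succ_last, Fin.cons_succ]

theorem exists_swap_isDrDS [DecidableEq V]
    (hdiam : ∀ u v : V, G.Reachable u v → G.dist u v ≤ r) {Ds Dt : Finset V}
    (hDs : IsDrDS G r ↑Ds) (hDt : IsDrDS G r ↑Dt) (hcard : Ds.card = Dt.card) {x : V}
    (hx : x ∈ Ds \ Dt) :
    ∃ y ∈ Dt \ Ds, IsDrDS G r ↑(insert y (Ds.erase x)) := by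
  obtain ⟨hxs, hxt⟩ := Finset.mem_sdiff.mp hx
  obtain ⟨y, hyt, hyx, -⟩ := hDt x
  by_cases hys : y ∈ Ds
  · obtain ⟨y₀, hy₀⟩ : (Dt \ Ds).Nonempty := by
      rw [← Finset.card_pos, ← Finset.card_sdiff_comm hcard]
      exact Finset.card_pos.mpr ⟨x, hx⟩
    have hyx_ne : y ≠ x := by rintro rfl; exact hxt hyt
    exact ⟨y₀, hy₀, hDs.insert_erase hdiam
      (Finset.mem_insert_of_mem (Finset.mem_erase.mpr ⟨hyx_ne, hys⟩)) hyx⟩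
  · exact ⟨y, Finset.mem_sdiff.mpr ⟨hyt, hys⟩,
      hDs.insert_erase hdiam (Finset.mem_insert_self _ _) hyx⟩

theorem tjReachable_of_card_eq (hdiam : ∀ u v : V, G.Reachable u v → G.dist u v ≤ r)
    {Ds Dt : Finset V} (hDs : IsDrDS G r ↑Ds) (hDt : IsDrDS G r ↑Dt)
    (hcard : Ds.card = Dt.card) : TJReachable G r Ds Dt := by
  classical
  induction hn : (Ds \ Dt).card generalizing Ds with
  | zero =>
    obtain rfl : Ds = Dt := Finset.eq_of_subset_of_card_le
      (Finset.sdiff_eq_empty_iff_subset.mp (Finset.card_eq_zero.mp hn)) hcard.ge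
    exact TJReachable.refl hDs
  | succ n ih =>
    obtain ⟨x, hx⟩ := Finset.card_pos.mp (by rw [hn]; exact n.succ_pos)
    obtain ⟨y, hy, hD'⟩ := exists_swap_isDrDS hdiam hDs hDt hcard hx
    obtain ⟨hyt, hys⟩ := Finset.mem_sdiff.mp hy
    have hxs := (Finset.mem_sdiff.mp hx).1
    refine TJReachable.head hDs hxs hys (ih hD' ?_ ?_)
    · rw [Finset.card_insert_of_notMem fun h ↦ hys (Finset.mem_of_mem_erase h),
        Finset.card_erase_add_one hxs, hcard]
    · rw [Finset.insert_sdiff_of_mem _ hyt, Finset.erase_sdiff_comm, Finset.card_erase_of_mem hx,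
        hn, Nat.add_sub_cancel]

end

theorem stmt12_general {V : Type*} (G : SimpleGraph V) (r : ℕ)
    (hdiam : ∀ u v : V, G.Reachable u v → G.dist u v ≤ r)
    (Ds Dt : Finset V) (hDs : IsDrDS G r ↑Ds) (hDt : IsDrDS G r ↑Dt)
    (hcard : Ds.card = Dt.card) :
    ∃ (q : ℕ) (Dseq : Fin (q + 1) → Finset V),
      IsTJSeq G r q Dseq ∧ Dseq 0 = Ds ∧ Dseq (Fin.last q) = Dt :=
  tjReachable_of_card_eq hdiam hDs hDt hcard

theorem stmt12 {V : Type*} [Fintype V] (G : SimpleGraph V) (r : ℕ) (hr : 1 ≤ r)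
    (hdiam : ∀ u v : V, G.Reachable u v → G.dist u v ≤ r)
    (Ds Dt : Finset V) (hDs : IsDrDS G r ↑Ds) (hDt : IsDrDS G r ↑Dt)
    (hcard : Ds.card = Dt.card) :
    ∃ (q : ℕ) (Dseq : Fin (q + 1) → Finset V),
      IsTJSeq G r q Dseq ∧ Dseq 0 = Ds ∧ Dseq (Fin.last q) = Dt :=
  stmt12_general G r hdiam Ds Dt hDs hDt hcard
end

section
/- Let r ≥ 1 be an integer and let G be a finite graph each of whose connected components has diameter at most r. Then for any two distance-r dominating sets D_s, D_t of G with |D_s| = |D_t|, there exists a TS-sequence in G from D_s to D_t if and only if for every connected component C of G one has |D_s ∩ V(C)| = |D_t ∩ V(C)|. -/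
open Relation SimpleGraph

theorem Relation.reflTransGen_iff_exists_fin_chain {α : Type*} {R : α → α → Prop}
    {a b : α} :
    ReflTransGen R a b ↔ ∃ (q : ℕ) (f : Fin (q + 1) → α),
      f 0 = a ∧ f (Fin.last q) = b ∧ ∀ i : Fin q, R (f i.castSucc) (f i.succ) := by
  constructor
  · intro h
    induction h using ReflTransGen.head_induction_on with
    | refl => exact ⟨0, fun _ => b, rfl, rfl, Fin.elim0⟩
    | head hac _ ih =>
      obtain ⟨q, f, hf0, hflast, hf⟩ := ih
      refine ⟨q + 1, Fin.cons _ f, rfl, by rw [← Fin.succ_last, Fin.cons_succ, hflast], ?_⟩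
      intro i
      cases i using Fin.cases with
      | zero => simpa [hf0] using hac
      | succ i => simpa [← Fin.succ_castSucc] using hf i
  · rintro ⟨q, f, rfl, rfl, hf⟩
    suffices ∀ i, ReflTransGen R (f 0) (f i) from this _
    intro i
    induction i using Fin.induction with
    | zero => exact .refl
    | succ i ih => exact ih.tail (hf i)

theorem Set.ncard_insert_sdiff_singleton_inter {α : Type*} {s t : Set α} {x y : α}
    (hs : s.Finite) (hx : x ∈ s) (hy : y ∉ s) (hxy : x ∈ t ↔ y ∈ t) :
    (insert y (s \ {x}) ∩ t).ncard = (s ∩ t).ncard := by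
  by_cases hxt : x ∈ t
  · have hmem : x ∈ s ∩ t := ⟨hx, hxt⟩
    rw [Set.insert_inter_of_mem (hxy.mp hxt), ← Set.inter_sdiff_right_comm,
      Set.ncard_insert_of_notMem (fun h => hy h.1.1) ((hs.inter_of_left t).sdiff),
      Set.ncard_sdiff_singleton_add_one hmem (hs.inter_of_left t)]
  · rw [Set.insert_inter_of_notMem (mt hxy.mpr hxt), ← Set.inter_sdiff_right_comm,
      Set.sdiff_singleton_eq_self (fun h => hxt h.2)]

section TokenSliding

variable {V : Type*} {G : SimpleGraph V}

/-- The step relation of `IsTSSeq`: a TS-sequence is exactly a chain of `TSStep`s. -/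
def TSStep (G : SimpleGraph V) (D D' : Finset V) : Prop :=
  ∃ x ∈ D, ∃ y, y ∉ D ∧ G.Adj x y ∧ (↑D' : Set V) = (↑D \ {x}) ∪ {y}

noncomputable def componentCount (G : SimpleGraph V) (D : Finset V) (c : G.ConnectedComponent) :
    ℕ :=
  ((↑D : Set V) ∩ c.supp).ncard

theorem TSStep.of_adj [DecidableEq V] {D : Finset V} {x y : V} (hx : x ∈ D) (hy : y ∉ D)
    (hxy : G.Adj x y) : TSStep G D (insert y (D.erase x)) :=
  ⟨x, hx, y, hy, hxy, by rw [Finset.coe_insert, Finset.coe_erase, Set.union_singleton]⟩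

theorem TSStep.componentCount_eq {D D' : Finset V} (h : TSStep G D D')
    (c : G.ConnectedComponent) : componentCount G D' c = componentCount G D c := by
  obtain ⟨x, hx, y, hy, hxy, hD'⟩ := h
  rw [componentCount, componentCount, hD', Set.union_singleton]
  exact Set.ncard_insert_sdiff_singleton_inter D.finite_toSet hx hy
    (c.mem_supp_congr_adj hxy)

theorem Relation.ReflTransGen.componentCount_eq {D D' : Finset V}
    (h : ReflTransGen (TSStep G) D D') (c : G.ConnectedComponent) :
    componentCount G D' c = componentCount G D c := by
  induction h with
  | refl => rfl
  | tail _ hstep ih => rw [hstep.componentCount_eq, ih]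

theorem TSStep.isDrDS {r : ℕ} (hdiam : ∀ u v : V, G.Reachable u v → G.dist u v ≤ r)
    {D D' : Finset V} (h : TSStep G D D') (hD : IsDrDS G r ↑D) : IsDrDS G r ↑D' := by
  obtain ⟨x, -, y, -, hxy, hD'⟩ := h
  intro v
  obtain ⟨u, hu, huv, -⟩ := hD v
  by_cases hux : u = x
  · subst hux
    have hyv : G.Reachable y v := hxy.symm.reachable.trans huv
    exact ⟨y, by simp [hD'], hyv, hdiam y v hyv⟩
  · exact ⟨u, by simp [hD', hu, hux], huv, hdiam u v huv⟩

theorem reflTransGen_insert_erase_of_walk [DecidableEq V] {b a : V} (p : G.Walk b a) :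
    ∀ {D : Finset V}, b ∉ D → a ∈ D →
      ReflTransGen (TSStep G) D (insert b (D.erase a)) := by
  induction p with
  | nil => exact fun hb ha => absurd ha hb
  | @cons b c a hbc p ih =>
    intro D hb ha
    by_cases hc : c ∈ D
    · have hstep := TSStep.of_adj hc hb hbc.symm
      by_cases hca : c = a
      · subst hca
        exact .single hstep
      · have hrest := ih (D := insert b (D.erase c)) (by simp [hbc.ne.symm])
          (by simp [ha, Ne.symm hca])
        convert ReflTransGen.head hstep hrest using 1
        ext v
        simp only [Finset.mem_insert, Finset.mem_erase]
        grind
    · have hrest := ih hc ha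
      have hstep := TSStep.of_adj (D := insert c (D.erase a)) (by simp) (by simp [hbc.ne, hb])
        hbc.symm
      convert hrest.tail hstep using 1
      rw [Finset.erase_insert (by simp [hc])]

theorem exists_mem_sdiff_reachable_of_componentCount_eq {D B : Finset V} {b : V} (hbB : b ∈ B)
    (hbD : b ∉ D) (h : componentCount G D (G.connectedComponentMk b) =
      componentCount G B (G.connectedComponentMk b)) :
    ∃ a ∈ D, a ∉ B ∧ G.Reachable b a := by
  set T := (G.connectedComponentMk b).supp
  have hlt : (((↑B : Set V) ∩ T) \ {b}).ncard < ((↑D : Set V) ∩ T).ncard := by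
    change _ < componentCount G D _
    rw [h]
    exact Set.ncard_sdiff_singleton_lt_of_mem ⟨hbB, rfl⟩ ((B.finite_toSet).inter_of_left T)
  obtain ⟨a, ⟨haD, haT⟩, ha⟩ := Set.exists_mem_notMem_of_ncard_lt_ncard hlt
  refine ⟨a, haD, fun haB => ha ⟨⟨haB, haT⟩, ?_⟩, ConnectedComponent.exact haT.symm⟩
  rintro rfl
  exact hbD haD

theorem reflTransGen_of_componentCount_eq {D B : Finset V}
    (h : ∀ c, componentCount G D c = componentCount G B c) : ReflTransGen (TSStep G) D B := by
  classical
  obtain ⟨n, hn⟩ : ∃ n, (B \ D).card = n := ⟨_, rfl⟩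
  induction n generalizing D with
  | zero =>
    have hBD : B ⊆ D := Finset.sdiff_eq_empty_iff_subset.mp (Finset.card_eq_zero.mp hn)
    have hDB : D ⊆ B := by
      intro a haD
      by_contra haB
      obtain ⟨b, hbB, hbD, -⟩ :=
        exists_mem_sdiff_reachable_of_componentCount_eq haD haB (h _).symm
      exact hbD (hBD hbB)
    rw [hBD.antisymm hDB]
  | succ n ih =>
    obtain ⟨b, hb⟩ := Finset.card_pos.mp (by rw [hn]; exact n.succ_pos)
    obtain ⟨hbB, hbD⟩ := Finset.mem_sdiff.mp hb
    obtain ⟨a, haD, haB, hba⟩ := exists_mem_sdiff_reachable_of_componentCount_eq hbB hbD (h _)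
    have hslide := reflTransGen_insert_erase_of_walk hba.some hbD haD
    refine hslide.trans (ih (fun c => (hslide.componentCount_eq c).trans (h c)) ?_)
    have hsdiff : B \ insert b (D.erase a) = (B \ D).erase b := by
      ext v
      simp only [Finset.mem_sdiff, Finset.mem_insert, Finset.mem_erase]
      grind
    rw [hsdiff, Finset.card_erase_of_mem hb, hn, Nat.add_sub_cancel]

end TokenSliding

theorem stmt13_general {V : Type*} (G : SimpleGraph V) (r : ℕ)
    (hdiam : ∀ u v : V, G.Reachable u v → G.dist u v ≤ r)
    (Ds Dt : Finset V) (hDs : IsDrDS G r ↑Ds) :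
    (∃ (q : ℕ) (Dseq : Fin (q + 1) → Finset V),
        IsTSSeq G r q Dseq ∧ Dseq 0 = Ds ∧ Dseq (Fin.last q) = Dt) ↔
    (∀ c : G.ConnectedComponent,
        ((↑Ds : Set V) ∩ {v | G.connectedComponentMk v = c}).ncard =
        ((↑Dt : Set V) ∩ {v | G.connectedComponentMk v = c}).ncard) := by
  constructor
  · rintro ⟨q, Dseq, ⟨-, hstep⟩, h0, hlast⟩ c
    have hreach : ReflTransGen (TSStep G) Ds Dt :=
      reflTransGen_iff_exists_fin_chain.mpr ⟨q, Dseq, h0, hlast, hstep⟩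
    exact (hreach.componentCount_eq c).symm
  · intro hcount
    obtain ⟨q, Dseq, h0, hlast, hstep⟩ :=
      reflTransGen_iff_exists_fin_chain.mp (reflTransGen_of_componentCount_eq hcount)
    refine ⟨q, Dseq, ⟨fun i => ?_, hstep⟩, h0, hlast⟩
    induction i using Fin.induction with
    | zero => rwa [h0]
    | succ i ih => exact (hstep i).isDrDS hdiam ih

theorem stmt13 {V : Type*} [Fintype V] (G : SimpleGraph V) (r : ℕ) (hr : 1 ≤ r)
    (hdiam : ∀ u v : V, G.Reachable u v → G.dist u v ≤ r)
    (Ds Dt : Finset V) (hDs : IsDrDS G r ↑Ds) (hDt : IsDrDS G r ↑Dt)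
    (hcard : Ds.card = Dt.card) :
    (∃ (q : ℕ) (Dseq : Fin (q + 1) → Finset V),
        IsTSSeq G r q Dseq ∧ Dseq 0 = Ds ∧ Dseq (Fin.last q) = Dt) ↔
    (∀ c : G.ConnectedComponent,
        ((↑Ds : Set V) ∩ {v | G.connectedComponentMk v = c}).ncard =
        ((↑Dt : Set V) ∩ {v | G.connectedComponentMk v = c}).ncard) :=
  stmt13_general G r hdiam Ds Dt hDs
end

section
/- Let T be a finite tree and let r ≥ 1 be an integer. Then there exist a minimum distance-r dominating set D* of T and a partition {C_v : v ∈ D*} of V(T) indexed by the vertices of D*, such that for every v ∈ D*: v ∈ C_v, the set C_v induces a connected subgraph of T, and every distance-r dominating set D of T satisfies D ∩ C_v ≠ ∅. -/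
open SimpleGraph

set_option linter.unusedSectionVars false
set_option maxHeartbeats 1000000

namespace Stmt15Aux

lemma find?_split {α : Type*} {p : α → Bool} {l : List α} {m : α} (h : l.find? p = some m) :
    ∃ l1 l2, l = l1 ++ m :: l2 ∧ ∀ x ∈ l1, ¬ (p x = true) := by
  induction l with
  | nil => simp at h
  | cons a l ih =>
    by_cases hpa : p a = true
    · rw [List.find?_cons_of_pos hpa] at h
      obtain rfl : a = m := by simpa using h
      exact ⟨[], l, by simp, by simp⟩
    · rw [List.find?_cons_of_neg hpa] at h
      obtain ⟨l1, l2, hl, h1⟩ := ih h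
      refine ⟨a :: l1, l2, by simp [hl], ?_⟩
      rintro x hx
      rcases List.mem_cons.mp hx with rfl | hx
      · exact hpa
      · exact h1 x hx

lemma find?_of_split {α : Type*} {p : α → Bool} {l1 l2 : List α} {m : α} (hm : p m = true)
    (h1 : ∀ x ∈ l1, ¬ (p x = true)) : (l1 ++ m :: l2).find? p = some m := by
  induction l1 with
  | nil => simpa using List.find?_cons_of_pos hm
  | cons a l ih =>
    rw [List.cons_append, List.find?_cons_of_neg (h1 a (by simp))]
    exact ih (fun x hx => h1 x (by simp [hx]))

variable {V : Type*} [DecidableEq V] {T : SimpleGraph V}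

lemma path_len (ht : T.IsTree) {a b : V} {p : T.Walk a b} (hp : p.IsPath) :
    p.length = T.dist a b := by
  obtain ⟨q, hq, hqd⟩ := ht.isConnected.exists_path_of_dist a b
  have h : (⟨p, hp⟩ : T.Path a b) = ⟨q, hq⟩ := ht.IsAcyclic.path_unique _ _
  rw [show p = q from congrArg Subtype.val h, hqd]

lemma btw_of_mem_support (ht : T.IsTree) {a b x : V} {p : T.Walk a b} (hp : p.IsPath)
    (hx : x ∈ p.support) : T.dist a x + T.dist x b = T.dist a b := by
  rw [← path_len ht (hp.takeUntil hx), ← path_len ht (hp.dropUntil hx), ← path_len ht hp,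
    ← Walk.length_append, p.take_spec hx]

lemma mem_support_of_btw (ht : T.IsTree) {a b x : V}
    (hbtw : T.dist a x + T.dist x b = T.dist a b) {p : T.Walk a b} (hp : p.IsPath) :
    x ∈ p.support := by
  obtain ⟨q1, hq1, hq1d⟩ := ht.isConnected.exists_path_of_dist a x
  obtain ⟨q2, hq2, hq2d⟩ := ht.isConnected.exists_path_of_dist x b
  have hW : (q1.append q2).length = T.dist a b := by
    rw [Walk.length_append, hq1d, hq2d, hbtw]
  have hWp := (q1.append q2).isPath_of_length_eq_dist hW
  have h : (⟨p, hp⟩ : T.Path a b) = ⟨_, hWp⟩ := ht.IsAcyclic.path_unique _ _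
  rw [show p = q1.append q2 from congrArg Subtype.val h, Walk.mem_support_append_iff]
  exact Or.inl q1.end_mem_support

lemma btw_trans (ht : T.IsTree) {ρ u v m : V}
    (h1 : T.dist ρ v + T.dist v u = T.dist ρ u)
    (h2 : T.dist ρ m + T.dist m u = T.dist ρ u)
    (hle : T.dist ρ v ≤ T.dist ρ m) : T.dist ρ v + T.dist v m = T.dist ρ m := by
  obtain ⟨p, hp, hpd⟩ := ht.isConnected.exists_path_of_dist ρ u
  have hm : m ∈ p.support := mem_support_of_btw ht h2 hp
  have hv : v ∈ p.support := mem_support_of_btw ht h1 hp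
  have hv' : v ∈ (p.takeUntil m hm).support ∨ v ∈ (p.dropUntil m hm).support := by
    rw [← Walk.mem_support_append_iff, p.take_spec hm]; exact hv
  rcases hv' with hv' | hv'
  · exact btw_of_mem_support ht (hp.takeUntil hm) hv'
  · have hc := btw_of_mem_support ht (hp.dropUntil hm) hv'
    have hcomm : T.dist m v = T.dist v m := SimpleGraph.dist_comm ..
    omega

lemma first_common {a b c : V} (p1 : T.Walk b a) (p2 : T.Walk c a) (hp2 : p2.IsPath)
    (hp1 : p1.IsPath) :
    ∃ (m : V) (q1 : T.Walk b m), q1.IsPath ∧ (∀ x ∈ q1.support, x ∈ p1.support) ∧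
      (∀ x ∈ q1.support, x ∈ p2.support → x = m) ∧ m ∈ p2.support := by
  induction p1 generalizing c with
  | nil =>
    exact ⟨_, Walk.nil, by simp, by simp, by simp, p2.end_mem_support⟩
  | @cons u v w h q ih =>
    rw [Walk.cons_isPath_iff] at hp1
    by_cases hu : u ∈ p2.support
    · exact ⟨u, Walk.nil, by simp, by simp, by simp, hu⟩
    · obtain ⟨m, q1, hq1, hsub, hint, hm⟩ := ih p2 hp2 hp1.1
      refine ⟨m, Walk.cons h q1, ?_, ?_, ?_, hm⟩
      · rw [Walk.cons_isPath_iff]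
        exact ⟨hq1, fun hmem => hp1.2 (hsub u hmem)⟩
      · intro x hx
        rw [Walk.support_cons] at hx ⊢
        rcases List.mem_cons.mp hx with rfl | hx'
        · exact List.mem_cons_self
        · exact List.mem_cons_of_mem _ (hsub x hx')
      · intro x hx hx2
        rw [Walk.support_cons] at hx
        rcases List.mem_cons.mp hx with rfl | hx'
        · exact absurd hx2 hu
        · exact hint x hx' hx2

lemma median (ht : T.IsTree) (a b c : V) : ∃ m : V,
    T.dist b m + T.dist m a = T.dist b a ∧ T.dist c m + T.dist m a = T.dist c a ∧
      T.dist b m + T.dist m c = T.dist b c := by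
  obtain ⟨p1, hp1, _⟩ := ht.isConnected.exists_path_of_dist b a
  obtain ⟨p2, hp2, _⟩ := ht.isConnected.exists_path_of_dist c a
  obtain ⟨m, q1, hq1, hsub, hint, hm⟩ := first_common p1 p2 hp2 hp1
  have hm1 : m ∈ p1.support := hsub m q1.end_mem_support
  refine ⟨m, btw_of_mem_support ht hp1 hm1, btw_of_mem_support ht hp2 hm, ?_⟩
  set q2 := p2.takeUntil m hm with hq2def
  have hq2 : q2.IsPath := hp2.takeUntil hm
  have hq2sub : ∀ x ∈ q2.support, x ∈ p2.support := fun x hx =>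
    p2.support_takeUntil_subset hm hx
  have hW : (q1.append q2.reverse).IsPath := by
    rw [Walk.isPath_def, Walk.support_append]
    rw [List.nodup_append]
    refine ⟨hq1.support_nodup, ?_, ?_⟩
    · have : q2.reverse.support.Nodup := hq2.reverse.support_nodup
      rw [q2.reverse.support_eq_cons] at this
      exact this.of_cons
    · intro x hx1 x' hx2 hxx'
      subst hxx'
      have hxtail : x ∈ q2.reverse.support.tail := hx2
      have hxrev : x ∈ q2.reverse.support := List.mem_of_mem_tail hxtail
      have hxq2 : x ∈ q2.support := by
        rwa [Walk.support_reverse, List.mem_reverse] at hxrev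
      have hxm : x = m := hint x hx1 (hq2sub x hxq2)
      subst hxm
      have : q2.reverse.support.Nodup := hq2.reverse.support_nodup
      rw [q2.reverse.support_eq_cons] at this
      exact (List.nodup_cons.mp this).1 hxtail
  have hmW : m ∈ (q1.append q2.reverse).support := by
    rw [Walk.mem_support_append_iff]; exact Or.inl q1.end_mem_support
  exact btw_of_mem_support ht hW hmW

lemma exists_at_dist (ht : T.IsTree) (a b : V) :
    ∀ k, k ≤ T.dist a b → ∃ x, T.dist a x = k ∧ T.dist a x + T.dist x b = T.dist a b := by
  intro k
  induction k with
  | zero => intro _; refine ⟨a, ?_, ?_⟩ <;> simp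
  | succ k ih =>
    intro hk1
    obtain ⟨x, hx1, hx2⟩ := ih (by omega)
    have hxb : 1 ≤ T.dist x b := by omega
    obtain ⟨p, hp, hpd⟩ := ht.isConnected.exists_path_of_dist x b
    cases p with
    | nil => simp at hpd; omega
    | @cons _ y _ hadj q =>
      have hq : q.IsPath := hp.of_cons
      have hyb : T.dist y b = T.dist x b - 1 := by
        have := path_len ht hq
        rw [Walk.length_cons] at hpd
        omega
      have hxy : T.dist x y = 1 := SimpleGraph.dist_eq_one_iff_adj.mpr hadj
      have htri1 : T.dist a y ≤ T.dist a x + T.dist x y :=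
        ht.isConnected.dist_triangle
      have htri2 : T.dist a b ≤ T.dist a y + T.dist y b :=
        ht.isConnected.dist_triangle
      exact ⟨y, by omega, by omega⟩

lemma separation (ht : T.IsTree) (r : ℕ) {root ui uj di : V}
    (h1 : T.dist ui di + T.dist di root = T.dist ui root)
    (h2 : T.dist ui di = min (T.dist root ui) r)
    (hdepth : T.dist root uj ≤ T.dist root ui)
    (htrig : r < T.dist uj di) : 2 * r + 1 ≤ T.dist ui uj := by
  obtain ⟨m, A1, A2, A3⟩ := median ht root ui uj
  have c1 : T.dist ui root = T.dist root ui := SimpleGraph.dist_comm ..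
  have c2 : T.dist root di = T.dist di root := SimpleGraph.dist_comm ..
  have c3 : T.dist uj root = T.dist root uj := SimpleGraph.dist_comm ..
  have c4 : T.dist m di = T.dist di m := SimpleGraph.dist_comm ..
  have c5 : T.dist m uj = T.dist uj m := SimpleGraph.dist_comm ..
  have c6 : T.dist di ui = T.dist ui di := SimpleGraph.dist_comm ..
  have c7 : T.dist m ui = T.dist ui m := SimpleGraph.dist_comm ..
  have c8 : T.dist m root = T.dist root m := SimpleGraph.dist_comm ..
  have t1 : T.dist uj di ≤ T.dist uj m + T.dist m di := ht.isConnected.dist_triangle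
  have t3 : T.dist uj di ≤ T.dist uj root + T.dist root di := ht.isConnected.dist_triangle
  by_cases hcase : T.dist ui di ≤ T.dist ui m
  · have hB : T.dist ui di + T.dist di m = T.dist ui m := btw_trans ht h1 A1 hcase
    omega
  · have hd1 : T.dist root di + T.dist di ui = T.dist root ui := by omega
    have hd2 : T.dist root m + T.dist m ui = T.dist root ui := by omega
    have hB : T.dist root di + T.dist di m = T.dist root m :=
      btw_trans ht hd1 hd2 (by omega)
    omega

lemma greedy (ht : T.IsTree) (r : ℕ) (root : V) (domv : V → V)
    (hdom1 : ∀ w, T.dist w (domv w) = min (T.dist root w) r)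
    (hdom2 : ∀ w, T.dist w (domv w) + T.dist (domv w) root = T.dist w root) :
    ∀ (rest : List V) (acc : List (V × V)),
      (∀ pr ∈ acc, pr.2 = domv pr.1) →
      acc.Pairwise (fun pr qr => 2 * r + 1 ≤ T.dist pr.1 qr.1 ∧ pr.2 ≠ qr.2) →
      (∀ pr ∈ acc, ∀ w ∈ rest, T.dist root w ≤ T.dist root pr.1) →
      rest.Pairwise (fun a b => T.dist root b ≤ T.dist root a) →
      ∃ res : List (V × V),
        (∀ pr ∈ acc, pr ∈ res) ∧
        (∀ pr ∈ res, pr.2 = domv pr.1) ∧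
        res.Pairwise (fun pr qr => 2 * r + 1 ≤ T.dist pr.1 qr.1 ∧ pr.2 ≠ qr.2) ∧
        (∀ w ∈ rest, ∃ pr ∈ res, T.dist w pr.2 ≤ r) := by
  intro rest
  induction rest with
  | nil =>
    intro acc h1 h2 _ _
    exact ⟨acc, fun pr hpr => hpr, h1, h2, by simp⟩
  | cons w rest' ih =>
    intro acc hinv hpair hdepth hsort
    obtain ⟨hw_all, hsort'⟩ := List.pairwise_cons.mp hsort
    by_cases htrig : ∀ pr ∈ acc, r < T.dist w pr.2
    · have hnewpair : ∀ qr ∈ acc, 2 * r + 1 ≤ T.dist w qr.1 ∧ domv w ≠ qr.2 := by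
        intro qr hqr
        have hq2 : qr.2 = domv qr.1 := hinv qr hqr
        have hsep : 2 * r + 1 ≤ T.dist qr.1 w := by
          refine separation ht r (root := root) (ui := qr.1) (uj := w) (di := qr.2) ?_ ?_ ?_ ?_
          · rw [hq2]; exact hdom2 qr.1
          · rw [hq2]; exact hdom1 qr.1
          · exact hdepth qr hqr w (List.mem_cons_self)
          · exact htrig qr hqr
        constructor
        · rwa [SimpleGraph.dist_comm] at hsep
        · intro heq
          have h1 : T.dist w qr.2 ≤ r := by
            rw [← heq]
            have := hdom1 w
            omega
          have := htrig qr hqr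
          omega
      have hinv' : ∀ pr ∈ (w, domv w) :: acc, pr.2 = domv pr.1 := by
        rintro pr hpr
        rcases List.mem_cons.mp hpr with rfl | hpr'
        · rfl
        · exact hinv pr hpr'
      have hpair' : ((w, domv w) :: acc).Pairwise
          (fun pr qr => 2 * r + 1 ≤ T.dist pr.1 qr.1 ∧ pr.2 ≠ qr.2) :=
        List.Pairwise.cons (fun qr hqr => hnewpair qr hqr) hpair
      have hdepth' : ∀ pr ∈ (w, domv w) :: acc, ∀ w' ∈ rest',
          T.dist root w' ≤ T.dist root pr.1 := by
        rintro pr hpr w' hw'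
        rcases List.mem_cons.mp hpr with rfl | hpr'
        · exact hw_all w' hw'
        · exact hdepth pr hpr' w' (List.mem_cons_of_mem _ hw')
      obtain ⟨res, hsub, h1, h2, h3⟩ := ih ((w, domv w) :: acc) hinv' hpair' hdepth' hsort'
      refine ⟨res, fun pr hpr => hsub pr (List.mem_cons_of_mem _ hpr), h1, h2, ?_⟩
      intro w' hw'
      rcases List.mem_cons.mp hw' with rfl | hw''
      · refine ⟨(w', domv w'), hsub _ (List.mem_cons_self), ?_⟩
        show T.dist w' (domv w') ≤ r
        have := hdom1 w'
        omega
      · exact h3 w' hw''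
    · push_neg at htrig
      obtain ⟨pr0, hpr0, hle0⟩ := htrig
      have hdepth' : ∀ pr ∈ acc, ∀ w' ∈ rest', T.dist root w' ≤ T.dist root pr.1 :=
        fun pr hpr w' hw' => hdepth pr hpr w' (List.mem_cons_of_mem _ hw')
      obtain ⟨res, hsub, h1, h2, h3⟩ := ih acc hinv hpair hdepth' hsort'
      refine ⟨res, hsub, h1, h2, ?_⟩
      intro w' hw'
      rcases List.mem_cons.mp hw' with rfl | hw''
      · exact ⟨pr0, hsub pr0 hpr0, hle0⟩
      · exact h3 w' hw''

lemma reach_induce {s : Set V} : ∀ {a b : V} (p : T.Walk a b)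
    (hp : ∀ x ∈ p.support, x ∈ s),
    (T.induce s).Reachable ⟨a, hp a p.start_mem_support⟩ ⟨b, hp b p.end_mem_support⟩ := by
  intro a b p
  induction p with
  | nil => intro hp; exact Reachable.refl _
  | @cons u v w h q ih =>
    intro hp
    have hq : ∀ x ∈ q.support, x ∈ s := fun x hx =>
      hp x (by rw [Walk.support_cons]; exact List.mem_cons_of_mem _ hx)
    have hadj : (T.induce s).Adj ⟨u, hp u (Walk.start_mem_support _)⟩
        ⟨v, hq v (Walk.start_mem_support _)⟩ := h
    exact hadj.reachable.trans (ih hq)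

end Stmt15Aux

theorem stmt15 {V : Type*} [Fintype V] (T : SimpleGraph V) (htree : T.IsTree)
    (r : ℕ) (hr : 1 ≤ r) :
    ∃ Dstar : Finset V,
      -- `Dstar` is a minimum distance-`r` dominating set of `T`
      IsDrDS T r ↑Dstar ∧
      (∀ D : Finset V, IsDrDS T r ↑D → Dstar.card ≤ D.card) ∧
      -- a partition `{C v : v ∈ Dstar}` of `V`
      ∃ C : V → Set V,
        (∀ v ∈ Dstar, v ∈ C v) ∧
        (∀ v ∈ Dstar, ∀ w ∈ Dstar, v ≠ w → Disjoint (C v) (C w)) ∧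
        (⋃ v ∈ Dstar, C v) = Set.univ ∧
        -- each part induces a connected subgraph of `T`
        (∀ v ∈ Dstar, (T.induce (C v)).Connected) ∧
        -- each part meets every distance-`r` dominating set of `T`
        (∀ D : Finset V, IsDrDS T r ↑D → ∀ v ∈ Dstar, ((↑D : Set V) ∩ C v).Nonempty) := by
  classical
  open Stmt15Aux in
  have hconn := htree.isConnected
  have hne : Nonempty V := hconn.nonempty
  obtain ⟨root⟩ := hne
  -- the dominator-assigning function
  have hex : ∀ w : V, ∃ x, T.dist w x = min (T.dist root w) r ∧
      T.dist w x + T.dist x root = T.dist w root := by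
    intro w
    have hk : min (T.dist root w) r ≤ T.dist w root := by
      rw [SimpleGraph.dist_comm]
      exact min_le_left _ _
    exact exists_at_dist htree w root _ hk
  choose domv hdom1 hdom2 using hex
  -- a depth-sorted enumeration of the vertices
  let R : V → V → Prop := fun a b => T.dist root b ≤ T.dist root a
  haveI : Std.Total R := ⟨fun a b => le_total _ _⟩
  haveI : IsTrans V R := ⟨fun a b c hab hbc => le_trans hbc hab⟩
  let lex := List.insertionSort R Finset.univ.toList
  have hlex_sorted : lex.Pairwise R := List.pairwise_insertionSort R _
  have hlex_mem : ∀ w : V, w ∈ lex := fun w =>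
    (List.perm_insertionSort R _).mem_iff.mpr (by simp)
  obtain ⟨pairs, -, hinv, hpair, hcov'⟩ := greedy htree r root domv hdom1 hdom2 lex []
    (by simp) (by simp) (by simp) hlex_sorted
  have hcov : ∀ w : V, ∃ pr ∈ pairs, T.dist w pr.2 ≤ r := fun w => hcov' w (hlex_mem w)
  have hQsymm : Symmetric (fun pr qr : V × V =>
      2 * r + 1 ≤ T.dist pr.1 qr.1 ∧ pr.2 ≠ qr.2) := by
    intro a b hab
    exact ⟨by rw [SimpleGraph.dist_comm]; exact hab.1, hab.2.symm⟩
  have hsep : ∀ pr ∈ pairs, ∀ qr ∈ pairs, pr ≠ qr →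
      2 * r + 1 ≤ T.dist pr.1 qr.1 ∧ pr.2 ≠ qr.2 :=
    fun pr hpr qr hqr hne' => (haveI : Std.Symm (fun pr qr : V × V =>
        2 * r + 1 ≤ T.dist pr.1 qr.1 ∧ pr.2 ≠ qr.2) := ⟨fun a b h => hQsymm h⟩
      hpair.forall hpr hqr hne')
  have hfst : ∀ pr ∈ pairs, ∀ qr ∈ pairs, pr.1 = qr.1 → pr = qr := by
    intro pr hpr qr hqr heq
    by_contra hne'
    have h := (hsep pr hpr qr hqr hne').1
    rw [heq, SimpleGraph.dist_self] at h
    omega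
  have hsnd : ∀ pr ∈ pairs, ∀ qr ∈ pairs, pr.2 = qr.2 → pr = qr := by
    intro pr hpr qr hqr heq
    by_contra hne'
    exact (hsep pr hpr qr hqr hne').2 heq
  have hsep1 : ∀ pr ∈ pairs, ∀ qr ∈ pairs, pr.1 ≠ qr.1 → 2 * r + 1 ≤ T.dist pr.1 qr.1 := by
    intro pr hpr qr hqr hne1
    exact (hsep pr hpr qr hqr (fun h => hne1 (by rw [h]))).1
  have hpairdist : ∀ pr ∈ pairs, T.dist pr.1 pr.2 ≤ r := by
    intro pr hpr
    rw [hinv pr hpr]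
    have := hdom1 pr.1
    omega
  set lU := pairs.map Prod.fst with hlU
  have hUnodup : lU.Nodup := by
    refine List.Pairwise.map _ ?_ hpair
    intro a b hab heq
    have := hab.1
    rw [heq, SimpleGraph.dist_self] at this
    omega
  -- the "is-a-closest-element-of-lU" predicate
  let P : V → V → Prop := fun x u => ∀ u' ∈ lU, T.dist x u ≤ T.dist x u'
  let pb : V → V → Bool := fun x u => decide (P x u)
  let best : V → Option V := fun x => lU.find? (pb x)
  have hbest_of_close : ∀ pr ∈ pairs, ∀ x, T.dist x pr.1 ≤ r → best x = some pr.1 := by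
    intro pr hpr x hx
    have hP : P x pr.1 := by
      intro u' hu'
      obtain ⟨qr, hqr, rfl⟩ := List.mem_map.mp hu'
      by_cases h : pr.1 = qr.1
      · rw [← h]
      · have hdd := hsep1 pr hpr qr hqr h
        have htri : T.dist pr.1 qr.1 ≤ T.dist pr.1 x + T.dist x qr.1 := hconn.dist_triangle
        have hc : T.dist pr.1 x = T.dist x pr.1 := SimpleGraph.dist_comm ..
        omega
    have hmemU : pr.1 ∈ lU := List.mem_map.mpr ⟨pr, hpr, rfl⟩
    obtain ⟨s, t, hsplit⟩ := List.append_of_mem hmemU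
    have hfail : ∀ u'' ∈ s, ¬ (pb x u'' = true) := by
      intro u'' hu''s hdec
      have hu''lU : u'' ∈ lU := by rw [hsplit]; exact List.mem_append_left _ hu''s
      have hne' : u'' ≠ pr.1 := by
        intro heq
        subst heq
        rw [hsplit] at hUnodup
        exact (List.disjoint_of_nodup_append hUnodup) hu''s (List.mem_cons_self)
      obtain ⟨qr, hqr, rfl⟩ := List.mem_map.mp hu''lU
      have hPu'' : P x qr.1 := of_decide_eq_true hdec
      have h1 := hPu'' pr.1 hmemU
      have hdd := hsep1 pr hpr qr hqr (fun h => hne' h.symm)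
      have htri : T.dist pr.1 qr.1 ≤ T.dist pr.1 x + T.dist x qr.1 := hconn.dist_triangle
      have hc : T.dist pr.1 x = T.dist x pr.1 := SimpleGraph.dist_comm ..
      omega
    show lU.find? (pb x) = some pr.1
    rw [hsplit]
    exact Stmt15Aux.find?_of_split (decide_eq_true hP) hfail
  have hbest_total : ∀ x : V, ∃ pr ∈ pairs, best x = some pr.1 := by
    intro x
    obtain ⟨pr0, hpr0, _⟩ := hcov root
    have hU0 : pr0.1 ∈ lU := List.mem_map.mpr ⟨pr0, hpr0, rfl⟩
    obtain ⟨u0, hu0mem, hu0min⟩ := lU.toFinset.exists_min_image (fun u => T.dist x u)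
      ⟨pr0.1, List.mem_toFinset.mpr hU0⟩
    have hPu0 : P x u0 := fun u' hu' => hu0min u' (List.mem_toFinset.mpr hu')
    have hsome : (lU.find? (pb x)).isSome := by
      rw [List.find?_isSome]
      exact ⟨u0, List.mem_toFinset.mp hu0mem, decide_eq_true hPu0⟩
    obtain ⟨t, ht⟩ := Option.isSome_iff_exists.mp hsome
    have htlU : t ∈ lU := List.mem_of_find?_eq_some ht
    obtain ⟨qr, hqr, rfl⟩ := List.mem_map.mp htlU
    exact ⟨qr, hqr, ht⟩
  -- the dominating set and the cells
  -- the dominating set and the cells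
  set Dstar := (pairs.map Prod.snd).toFinset with hDstar
  have hmemD : ∀ v, v ∈ Dstar ↔ ∃ pr ∈ pairs, pr.2 = v := by
    intro v
    rw [hDstar, List.mem_toFinset, List.mem_map]
  let C : V → Set V := fun v => {x | ∃ pr ∈ pairs, pr.2 = v ∧ best x = some pr.1}
  have hclose_mem : ∀ pr ∈ pairs, ∀ x, T.dist x pr.1 ≤ r → x ∈ C pr.2 :=
    fun pr hpr x hx => ⟨pr, hpr, rfl, hbest_of_close pr hpr x hx⟩
  have hCdisj : ∀ v ∈ Dstar, ∀ w ∈ Dstar, v ≠ w → Disjoint (C v) (C w) := by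
    intro v hv w hw hvw
    rw [Set.disjoint_left]
    rintro x ⟨pr, hpr, hpv, hbx⟩ ⟨qr, hqr, hqw, hbx'⟩
    apply hvw
    rw [← hpv, ← hqw]
    have h1 : pr.1 = qr.1 := Option.some_injective _ (hbx.symm.trans hbx')
    rw [hfst pr hpr qr hqr h1]
  have hCtrans : ∀ D : Finset V, IsDrDS T r ↑D → ∀ v ∈ Dstar,
      ((↑D : Set V) ∩ C v).Nonempty := by
    intro D hD v hv
    obtain ⟨pr, hpr, hpv⟩ := (hmemD v).mp hv
    obtain ⟨dd, hddD, _, hdist⟩ := hD pr.1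
    exact ⟨dd, hddD, hpv ▸ hclose_mem pr hpr dd hdist⟩
  refine ⟨Dstar, ?_, ?_, C, ?_, hCdisj, ?_, ?_, hCtrans⟩
  · -- IsDrDS
    intro w
    obtain ⟨pr, hpr, hle⟩ := hcov w
    refine ⟨pr.2, ?_, hconn.preconnected _ _, ?_⟩
    · rw [Finset.mem_coe, hDstar, List.mem_toFinset]
      exact List.mem_map.mpr ⟨pr, hpr, rfl⟩
    · rw [SimpleGraph.dist_comm]; exact hle
  · -- minimality
    intro D hD
    have htr : ∀ v : V, ∃ x, v ∈ Dstar → x ∈ D ∧ x ∈ C v := by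
      intro v
      by_cases hv : v ∈ Dstar
      · obtain ⟨x, hx1, hx2⟩ := hCtrans D hD v hv
        exact ⟨x, fun _ => ⟨Finset.mem_coe.mp hx1, hx2⟩⟩
      · exact ⟨v, fun h => absurd h hv⟩
    choose f hf using htr
    refine Finset.card_le_card_of_injOn f (fun v hv => (hf v (Finset.mem_coe.mp hv)).1) ?_
    intro v hv w hw heq
    by_contra hvw
    have hd := hCdisj v (Finset.mem_coe.mp hv) w (Finset.mem_coe.mp hw) hvw
    rw [Set.disjoint_left] at hd
    exact hd (hf v (Finset.mem_coe.mp hv)).2 (heq ▸ (hf w (Finset.mem_coe.mp hw)).2)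
  · -- v ∈ C v
    intro v hv
    obtain ⟨pr, hpr, hpv⟩ := (hmemD v).mp hv
    subst hpv
    apply hclose_mem pr hpr
    rw [SimpleGraph.dist_comm]
    exact hpairdist pr hpr
  · -- union
    rw [Set.eq_univ_iff_forall]
    intro x
    obtain ⟨pr, hpr, hbx⟩ := hbest_total x
    rw [Set.mem_iUnion₂]
    exact ⟨pr.2, (hmemD _).mpr ⟨pr, hpr, rfl⟩, ⟨pr, hpr, rfl, hbx⟩⟩
  · -- connectivity
    intro v hv
    obtain ⟨pr, hpr, hpv⟩ := (hmemD v).mp hv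
    have hCv : ∀ x, x ∈ C v ↔ best x = some pr.1 := by
      intro x
      constructor
      · rintro ⟨qr, hqr, hqv, hbx⟩
        rwa [hsnd qr hqr pr hpr (hqv.trans hpv.symm)] at hbx
      · intro hbx; exact ⟨pr, hpr, hpv, hbx⟩
    have hmemU : pr.1 ∈ lU := List.mem_map.mpr ⟨pr, hpr, rfl⟩
    have hstar : ∀ x, best x = some pr.1 → ∀ y,
        T.dist x y + T.dist y pr.1 = T.dist x pr.1 → best y = some pr.1 := by
      intro x hbx y hbtw
      have hbx2 : List.find? (pb x) lU = some pr.1 := hbx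
      obtain ⟨s, t2, hsplit, hfail⟩ := Stmt15Aux.find?_split hbx2
      have hpbx : pb x pr.1 = true := List.find?_some hbx2
      have hPx : P x pr.1 := of_decide_eq_true hpbx
      have hPy : P y pr.1 := by
        intro u' hu'
        have h1 := hPx u' hu'
        have htri : T.dist x u' ≤ T.dist x y + T.dist y u' := hconn.dist_triangle
        omega
      show lU.find? (pb y) = some pr.1
      rw [hsplit]
      refine Stmt15Aux.find?_of_split (decide_eq_true hPy) ?_
      intro u'' hu'' hdec
      apply hfail u'' hu''
      have hPyu'' : P y u'' := of_decide_eq_true hdec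
      apply decide_eq_true
      intro u' hu'
      have h1 : T.dist y u'' ≤ T.dist y pr.1 := hPyu'' pr.1 hmemU
      have h2 := hPx u' hu'
      have htri : T.dist x u'' ≤ T.dist x y + T.dist y u'' := hconn.dist_triangle
      omega
    rw [SimpleGraph.connected_iff_exists_forall_reachable]
    have htC : pr.1 ∈ C v :=
      (hCv pr.1).mpr (hbest_of_close pr hpr pr.1 (by rw [SimpleGraph.dist_self]; omega))
    refine ⟨⟨pr.1, htC⟩, ?_⟩
    rintro ⟨x, hx⟩
    have hbx := (hCv x).mp hx
    obtain ⟨p, hp, hpd⟩ := hconn.exists_path_of_dist pr.1 x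
    have hsupp : ∀ y ∈ p.support, y ∈ C v := by
      intro y hy
      have hbtw := Stmt15Aux.btw_of_mem_support htree hp hy
      have c1 : T.dist pr.1 y = T.dist y pr.1 := SimpleGraph.dist_comm ..
      have c2 : T.dist pr.1 x = T.dist x pr.1 := SimpleGraph.dist_comm ..
      have c3 : T.dist y x = T.dist x y := SimpleGraph.dist_comm ..
      exact (hCv y).mpr (hstar x hbx y (by omega))
    exact Stmt15Aux.reach_induce p hsupp
end
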